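/- arXiv:1003.3548 — 11 statements merged into one kernel-verified Lean document; each statement's English description precedes it below -/
import Mathlib

section
/- Suppose all rates involving a change of at least two particles vanish, i.e. Γ̃^k = Π̃^{0,k} = Π̃^{-k,0} = 0 and Γ^k = Π^{0,k} = Π^{-k,0} = 0 for every k ≥ 2. Then, for fixed naturals α ≤ γ and β ≤ δ, Conditions (C+) and (C−) hold for all integers K ≥ 1 and all nondecreasing K-tuples j, m, h of naturals if and only if the following four statements hold: (1) if β = δ then Π̃^{0,1} + Γ̃^1 ≤ Π^{0,1} + Γ^1; (2) if β = δ and γ = α then Π̃^{0,1} ≤ Π^{0,1}; (3) if γ = α then Π̃^{-1,0} + Γ̃^1 ≥ Π^{-1,0} + Γ^1; (4) if γ = α and δ = β then Π̃^{-1,0} ≥ Π^{-1,0}. -/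
open scoped Classical in
lemma tsum_indicator_single' (f : ℕ → ℝ) (hf : ∀ k, 2 ≤ k → f k = 0)
    (S : Set ℕ) (h0 : 0 ∉ S) :
    ∑' k : ℕ, S.indicator f k = if 1 ∈ S then f 1 else 0 := by
  rw [← Set.indicator_apply]
  apply tsum_eq_single
  intro b hb
  rcases Nat.lt_or_ge b 2 with h | h
  · interval_cases b
    · exact Set.indicator_of_notMem h0 f
    · exact absurd rfl hb
  · by_cases hbS : b ∈ S
    · simp [Set.indicator_of_mem hbS, hf b h]
    · exact Set.indicator_of_notMem hbS f



/-- Condition (C+) of the paper for the tuple `(K, j, m)`, at values `(α,β) ≤ (γ,δ)`: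
`Σ_{k > δ−β+j₁} Π̃^{0,k} + Σ_{k ∈ I_a} Γ̃^k ≤ Σ_{l > j₁} Π^{0,l} + Σ_{l ∈ I_b} Γ^l`,
where `gl, bl` are the lower jump and birth rates and `gu, bu` the upper ones. -/
def CondPlus (α β γ δ : ℕ) (gl bl gu bu : ℕ → ℝ)
    (K : ℕ) (hK : 0 < K) (j m : Fin K → ℕ) : Prop :=
  (∑' k : ℕ, {k : ℕ | δ - β + j ⟨0, hK⟩ < k}.indicator bl k)
      + (∑' k : ℕ, {k : ℕ | ∃ i : Fin K, k ≤ m i ∧ δ - β + j i < k}.indicator gl k)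
    ≤ (∑' l : ℕ, {l : ℕ | j ⟨0, hK⟩ < l}.indicator bu l)
      + (∑' l : ℕ, {l : ℕ | ∃ i : Fin K, l ≤ γ - α + m i ∧ j i < l}.indicator gu l)

/-- Condition (C−) of the paper for the tuple `(K, h, m)`, at values `(α,β) ≤ (γ,δ)`:
`Σ_{k > h₁} Π̃^{-k,0} + Σ_{k ∈ I_d} Γ̃^k ≥ Σ_{l > γ−α+h₁} Π^{-l,0} + Σ_{l ∈ I_c} Γ^l`,
where `gl, dl` are the lower jump and death rates and `gu, du` the upper ones. -/
def CondMinus (α β γ δ : ℕ) (gl dl gu du : ℕ → ℝ)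
    (K : ℕ) (hK : 0 < K) (h m : Fin K → ℕ) : Prop :=
  (∑' k : ℕ, {k : ℕ | h ⟨0, hK⟩ < k}.indicator dl k)
      + (∑' k : ℕ, {k : ℕ | ∃ i : Fin K, k ≤ δ - β + m i ∧ h i < k}.indicator gl k)
    ≥ (∑' l : ℕ, {l : ℕ | γ - α + h ⟨0, hK⟩ < l}.indicator du l)
      + (∑' l : ℕ, {l : ℕ | ∃ i : Fin K, l ≤ m i ∧ γ - α + h i < l}.indicator gu l)

open scoped Classical in
lemma condPlus_iff (α β γ δ : ℕ) (gl bl gu bu : ℕ → ℝ)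
    (hgl1 : ∀ k, 2 ≤ k → gl k = 0) (hbl1 : ∀ k, 2 ≤ k → bl k = 0)
    (hgu1 : ∀ k, 2 ≤ k → gu k = 0) (hbu1 : ∀ k, 2 ≤ k → bu k = 0)
    (K : ℕ) (hK : 0 < K) (j m : Fin K → ℕ) :
    CondPlus α β γ δ gl bl gu bu K hK j m ↔
      ((if δ - β + j ⟨0, hK⟩ < 1 then bl 1 else 0)
        + (if (∃ i : Fin K, 1 ≤ m i ∧ δ - β + j i < 1) then gl 1 else 0)
      ≤ (if j ⟨0, hK⟩ < 1 then bu 1 else 0)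
        + (if (∃ i : Fin K, 1 ≤ γ - α + m i ∧ j i < 1) then gu 1 else 0)) := by
  unfold CondPlus
  rw [tsum_indicator_single' bl hbl1 _ (by simp),
      tsum_indicator_single' gl hgl1 _ (by simp),
      tsum_indicator_single' bu hbu1 _ (by simp),
      tsum_indicator_single' gu hgu1 _ (by simp)]
  simp only [Set.mem_setOf_eq]

open scoped Classical in
lemma condMinus_iff (α β γ δ : ℕ) (gl dl gu du : ℕ → ℝ)
    (hgl1 : ∀ k, 2 ≤ k → gl k = 0) (hdl1 : ∀ k, 2 ≤ k → dl k = 0)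
    (hgu1 : ∀ k, 2 ≤ k → gu k = 0) (hdu1 : ∀ k, 2 ≤ k → du k = 0)
    (K : ℕ) (hK : 0 < K) (h m : Fin K → ℕ) :
    CondMinus α β γ δ gl dl gu du K hK h m ↔
      ((if h ⟨0, hK⟩ < 1 then dl 1 else 0)
        + (if (∃ i : Fin K, 1 ≤ δ - β + m i ∧ h i < 1) then gl 1 else 0)
      ≥ (if γ - α + h ⟨0, hK⟩ < 1 then du 1 else 0)
        + (if (∃ i : Fin K, 1 ≤ m i ∧ γ - α + h i < 1) then gu 1 else 0)) := by
  unfold CondMinus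
  rw [tsum_indicator_single' dl hdl1 _ (by simp),
      tsum_indicator_single' gl hgl1 _ (by simp),
      tsum_indicator_single' du hdu1 _ (by simp),
      tsum_indicator_single' gu hgu1 _ (by simp)]
  simp only [Set.mem_setOf_eq]

/-- If all transition rates involving a change of at least two particles vanish, then for fixed
`α ≤ γ`, `β ≤ δ`, Conditions (C+) and (C−) hold for all `K ≥ 1` and all nondecreasing `K`-tuples
`j, m, h` if and only if the four one-particle inequalities of Proposition 2.3 hold. -/
theorem conditions_iff_of_single_particle
    (α β γ δ : ℕ) (hαγ : α ≤ γ) (hβδ : β ≤ δ)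
    (gl bl dl gu bu du : ℕ → ℝ)
    (hgl0 : ∀ k, 0 ≤ gl k) (hbl0 : ∀ k, 0 ≤ bl k) (hdl0 : ∀ k, 0 ≤ dl k)
    (hgu0 : ∀ k, 0 ≤ gu k) (hbu0 : ∀ k, 0 ≤ bu k) (hdu0 : ∀ k, 0 ≤ du k)
    (hgl1 : ∀ k, 2 ≤ k → gl k = 0) (hbl1 : ∀ k, 2 ≤ k → bl k = 0)
    (hdl1 : ∀ k, 2 ≤ k → dl k = 0)
    (hgu1 : ∀ k, 2 ≤ k → gu k = 0) (hbu1 : ∀ k, 2 ≤ k → bu k = 0)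
    (hdu1 : ∀ k, 2 ≤ k → du k = 0) :
    (∀ (K : ℕ) (hK : 0 < K) (j m h : Fin K → ℕ),
        Monotone j → Monotone m → Monotone h →
        CondPlus α β γ δ gl bl gu bu K hK j m ∧ CondMinus α β γ δ gl dl gu du K hK h m)
    ↔ ((β = δ → bl 1 + gl 1 ≤ bu 1 + gu 1)
        ∧ (β = δ → γ = α → bl 1 ≤ bu 1)
        ∧ (γ = α → dl 1 + gl 1 ≥ du 1 + gu 1)
        ∧ (γ = α → δ = β → dl 1 ≥ du 1)) := by
  constructor
  · intro H
    refine ⟨?_, ?_, ?_, ?_⟩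
    · intro hbd
      subst hbd
      have h1 := (H 1 Nat.one_pos (fun _ => 0) (fun _ => 1) (fun _ => 0)
        monotone_const monotone_const monotone_const).1
      rw [condPlus_iff _ _ _ _ gl bl gu bu hgl1 hbl1 hgu1 hbu1] at h1
      simp at h1
      linarith
    · intro hbd hga
      subst hbd; subst hga
      have h1 := (H 1 Nat.one_pos (fun _ => 0) (fun _ => 0) (fun _ => 0)
        monotone_const monotone_const monotone_const).1
      rw [condPlus_iff _ _ _ _ gl bl gu bu hgl1 hbl1 hgu1 hbu1] at h1
      simp at h1
      linarith
    · intro hga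
      subst hga
      have h1 := (H 1 Nat.one_pos (fun _ => 0) (fun _ => 1) (fun _ => 0)
        monotone_const monotone_const monotone_const).2
      rw [condMinus_iff _ _ _ _ gl dl gu du hgl1 hdl1 hgu1 hdu1] at h1
      simp at h1
      linarith
    · intro hga hdb
      subst hga; subst hdb
      have h1 := (H 1 Nat.one_pos (fun _ => 0) (fun _ => 0) (fun _ => 0)
        monotone_const monotone_const monotone_const).2
      rw [condMinus_iff _ _ _ _ gl dl gu du hgl1 hdl1 hgu1 hdu1] at h1
      simp at h1
      linarith
  · rintro ⟨H1, H2, H3, H4⟩ K hK j m h hj hm hh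
    constructor
    · rw [condPlus_iff α β γ δ gl bl gu bu hgl1 hbl1 hgu1 hbu1]
      by_cases hP1 : δ - β + j ⟨0, hK⟩ < 1
      · have hbd : β = δ := by omega
        have hj0 : j ⟨0, hK⟩ = 0 := by omega
        rw [if_pos hP1, if_pos (show j ⟨0, hK⟩ < 1 by omega)]
        by_cases hP2 : ∃ i : Fin K, 1 ≤ m i ∧ δ - β + j i < 1
        · rw [if_pos hP2]
          obtain ⟨i, hmi, hji⟩ := hP2
          rw [if_pos ⟨i, by omega, by omega⟩]
          exact H1 hbd
        · rw [if_neg hP2]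
          by_cases hga : γ = α
          · have h2 := H2 hbd hga
            have := hgu0 1
            split_ifs <;> linarith
          · rw [if_pos ⟨⟨0, hK⟩, by omega, by omega⟩]
            have := H1 hbd
            have := hgl0 1
            linarith
      · rw [if_neg hP1]
        have hP2 : ¬ ∃ i : Fin K, 1 ≤ m i ∧ δ - β + j i < 1 := by
          rintro ⟨i, hmi, hji⟩
          have := hj (show (⟨0, hK⟩ : Fin K) ≤ i by simp [Fin.le_def])
          omega
        rw [if_neg hP2]
        have := hbu0 1
        have := hgu0 1
        split_ifs <;> linarith
    · rw [condMinus_iff α β γ δ gl dl gu du hgl1 hdl1 hgu1 hdu1]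
      by_cases hQ1 : γ - α + h ⟨0, hK⟩ < 1
      · have hga : γ = α := by omega
        have hh0 : h ⟨0, hK⟩ = 0 := by omega
        rw [if_pos hQ1, if_pos (show h ⟨0, hK⟩ < 1 by omega)]
        by_cases hQ2 : ∃ i : Fin K, 1 ≤ m i ∧ γ - α + h i < 1
        · rw [if_pos hQ2]
          obtain ⟨i, hmi, hhi⟩ := hQ2
          rw [if_pos ⟨i, by omega, by omega⟩]
          exact H3 hga
        · rw [if_neg hQ2]
          by_cases hdb : δ = β
          · have h4 := H4 hga hdb
            have := hgl0 1
            split_ifs <;> linarith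
          · rw [if_pos ⟨⟨0, hK⟩, by omega, by omega⟩]
            have := H3 hga
            have := hgu0 1
            linarith
      · rw [if_neg hQ1]
        have hQ2 : ¬ ∃ i : Fin K, 1 ≤ m i ∧ γ - α + h i < 1 := by
          rintro ⟨i, hmi, hhi⟩
          have := hh (show (⟨0, hK⟩ : Fin K) ≤ i by simp [Fin.le_def])
          omega
        rw [if_neg hQ2]
        have := hdl0 1
        have := hgl0 1
        split_ifs <;> linarith
end

section
/- For a conservative system (all birth and death rates Π̃^{0,k}, Π̃^{-k,0}, Π^{0,l}, Π^{-l,0} are zero), the following are equivalent, for fixed naturals α ≤ γ and β ≤ δ and finitely supported nonnegative jump rates Γ̃, Γ : ℕ₊ → ℝ: (A) for every natural j, Σ_{k > δ−β+j} Γ̃^k ≤ Σ_{l > j} Γ^l, and for every natural h, Σ_{k > h} Γ̃^k ≥ Σ_{l > γ−α+h} Γ^l; (B) for every integer K ≥ 1 and all nondecreasing K-tuples j, m, h of naturals, Σ_{k ∈ I_a} Γ̃^k ≤ Σ_{l ∈ I_b} Γ^l and Σ_{k ∈ I_d} Γ̃^k ≥ Σ_{l ∈ I_c} Γ^l. -/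
private lemma gs_tsum_indicator_eq_sum (f : ℕ → ℝ) (s : Set ℕ) (t : Finset ℕ)
    (h : ∀ k, k ∈ s → f k ≠ 0 → k ∈ t) (hts : ∀ k ∈ t, k ∈ s) :
    ∑' k, s.indicator f k = ∑ k ∈ t, f k := by
  rw [tsum_eq_sum (s := t) ?_]
  · exact Finset.sum_congr rfl fun k hk => Set.indicator_of_mem (hts k hk) f
  · intro k hk
    by_cases hks : k ∈ s
    · rw [Set.indicator_of_mem hks]
      by_contra hne
      exact hk (h k hks hne)
    · exact Set.indicator_of_notMem hks f

private lemma gs_tail_split (f : ℕ → ℝ) (N : ℕ) (hN : ∀ k, N ≤ k → f k = 0)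
    {a b : ℕ} (hab : a ≤ b) :
    ∑ k ∈ Finset.Ioc a N, f k = (∑ k ∈ Finset.Ioc a b, f k) + ∑ k ∈ Finset.Ioc b N, f k := by
  rcases le_or_gt b N with h | h
  · exact (Finset.sum_Ioc_consecutive f hab h).symm
  · have he : Finset.Ioc b N = ∅ := Finset.Ioc_eq_empty (by omega)
    rcases le_or_gt a N with h' | h'
    · have e := Finset.sum_Ioc_consecutive f h' h.le
      have hz : ∑ k ∈ Finset.Ioc N b, f k = 0 :=
        Finset.sum_eq_zero fun k hk => hN k (Finset.mem_Ioc.mp hk).1.le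
      rw [he, Finset.sum_empty]
      linarith
    · have he' : Finset.Ioc a N = ∅ := Finset.Ioc_eq_empty (by omega)
      have hz : ∑ k ∈ Finset.Ioc a b, f k = 0 :=
        Finset.sum_eq_zero fun k hk => hN k (by have := Finset.mem_Ioc.mp hk; omega)
      rw [he, he', hz, Finset.sum_empty]
      ring

private lemma gs_single (N A B : ℕ) (f g : ℕ → ℝ) (hg : ∀ k, 0 ≤ g k)
    (hfN : ∀ k, N ≤ k → f k = 0) (hgN : ∀ k, N ≤ k → g k = 0)
    (H1 : ∀ x, ∑ k ∈ Finset.Ioc (A + x) N, f k ≤ ∑ k ∈ Finset.Ioc x N, g k)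
    (H2 : ∀ x, ∑ k ∈ Finset.Ioc (B + x) N, g k ≤ ∑ k ∈ Finset.Ioc x N, f k)
    (a b : ℕ) :
    ∑ k ∈ Finset.Ioc (A + a) b, f k ≤ ∑ k ∈ Finset.Ioc a (B + b), g k := by
  rcases le_or_gt b (A + a) with h | h
  · rw [Finset.Ioc_eq_empty (by omega), Finset.sum_empty]
    exact Finset.sum_nonneg fun k _ => hg k
  · have e1 := gs_tail_split f N hfN (show A + a ≤ b by omega)
    have e2 := gs_tail_split g N hgN (show a ≤ B + b by omega)
    have h1 := H1 a
    have h2 := H2 b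
    linarith

private lemma gs_core (N A B : ℕ) (f g : ℕ → ℝ) (hf : ∀ k, 0 ≤ f k) (hg : ∀ k, 0 ≤ g k)
    (hfN : ∀ k, N ≤ k → f k = 0) (hgN : ∀ k, N ≤ k → g k = 0)
    (H1 : ∀ x, ∑ k ∈ Finset.Ioc (A + x) N, f k ≤ ∑ k ∈ Finset.Ioc x N, g k)
    (H2 : ∀ x, ∑ k ∈ Finset.Ioc (B + x) N, g k ≤ ∑ k ∈ Finset.Ioc x N, f k) :
    ∀ (K : ℕ) (j m : ℕ → ℕ), Monotone j → Monotone m →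
      ∑ k ∈ (Finset.range K).biUnion (fun i => Finset.Ioc (A + j i) (m i)), f k
        ≤ ∑ l ∈ (Finset.range K).biUnion (fun i => Finset.Ioc (j i) (B + m i)), g l := by
  intro K
  induction K with
  | zero => intro j m _ _; simp
  | succ K IH =>
    obtain _ | n := K
    · intro j m _ _
      simpa using gs_single N A B f g hg hfN hgN H1 H2 (j 0) (m 0)
    · intro j m hj hm
      rcases le_or_gt (j (n + 1)) (B + m n) with hcase | hcase
      · -- merge the last two intervals
        set j' : ℕ → ℕ := fun i => j (min i n) with hj'def
        set m' : ℕ → ℕ := fun i => if i < n then m i else m (n + 1) with hm'def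
        have hj' : Monotone j' := fun a b hab => hj (min_le_min hab le_rfl)
        have hm' : Monotone m' := by
          intro a b hab
          simp only [hm'def]
          split_ifs with h1 h2 h2
          · exact hm hab
          · exact hm (by omega)
          · exact absurd hab (by omega)
          · exact le_rfl
        have hsub : ((Finset.range (n + 2)).biUnion fun i => Finset.Ioc (A + j i) (m i)) ⊆
            (Finset.range (n + 1)).biUnion fun i => Finset.Ioc (A + j' i) (m' i) := by
          intro x hx
          simp only [Finset.mem_biUnion, Finset.mem_range, Finset.mem_Ioc, hj'def, hm'def] at hx ⊢
          obtain ⟨i, hi, h1, h2⟩ := hx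
          by_cases hin : i < n
          · exact ⟨i, by omega, by rwa [Nat.min_eq_left (by omega)], by rwa [if_pos hin]⟩
          · refine ⟨n, by omega, ?_, ?_⟩
            · have : j n ≤ j i := hj (by omega)
              rw [Nat.min_self]
              omega
            · have : m i ≤ m (n + 1) := hm (by omega)
              rw [if_neg (lt_irrefl n)]
              omega
        have hequ : ((Finset.range (n + 2)).biUnion fun i => Finset.Ioc (j i) (B + m i)) =
            (Finset.range (n + 1)).biUnion fun i => Finset.Ioc (j' i) (B + m' i) := by
          ext x
          simp only [Finset.mem_biUnion, Finset.mem_range, Finset.mem_Ioc, hj'def, hm'def]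
          constructor
          · rintro ⟨i, hi, h1, h2⟩
            by_cases hin : i < n
            · exact ⟨i, by omega, by rwa [Nat.min_eq_left (by omega)], by rwa [if_pos hin]⟩
            · refine ⟨n, by omega, ?_, ?_⟩
              · have : j n ≤ j i := hj (by omega)
                rw [Nat.min_self]
                omega
              · have : m i ≤ m (n + 1) := hm (by omega)
                rw [if_neg (lt_irrefl n)]
                omega
          · rintro ⟨i, hi, h1, h2⟩
            by_cases hin : i < n
            · rw [Nat.min_eq_left (by omega)] at h1
              rw [if_pos hin] at h2
              exact ⟨i, by omega, h1, h2⟩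
            · have hi' : i = n := by omega
              rw [hi'] at h1 h2
              rw [Nat.min_self] at h1
              rw [if_neg (lt_irrefl n)] at h2
              rcases le_or_gt x (B + m n) with hx | hx
              · exact ⟨n, by omega, h1, hx⟩
              · exact ⟨n + 1, by omega, by omega, h2⟩
        calc ∑ k ∈ (Finset.range (n + 2)).biUnion (fun i => Finset.Ioc (A + j i) (m i)), f k
            ≤ ∑ k ∈ (Finset.range (n + 1)).biUnion (fun i => Finset.Ioc (A + j' i) (m' i)), f k :=
              Finset.sum_le_sum_of_subset_of_nonneg hsub (fun k _ _ => hf k)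
          _ ≤ ∑ l ∈ (Finset.range (n + 1)).biUnion (fun i => Finset.Ioc (j' i) (B + m' i)), g l :=
              IH j' m' hj' hm'
          _ = ∑ l ∈ (Finset.range (n + 2)).biUnion (fun i => Finset.Ioc (j i) (B + m i)), g l := by
              rw [hequ]
      · -- the last intervals are separated from the rest on both sides
        have d1 : Disjoint (Finset.Ioc (A + j (n + 1)) (m (n + 1)))
            ((Finset.range (n + 1)).biUnion fun i => Finset.Ioc (A + j i) (m i)) := by
          rw [Finset.disjoint_left]
          intro x hx hx'
          obtain ⟨hx1, hx2⟩ := Finset.mem_Ioc.mp hx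
          simp only [Finset.mem_biUnion, Finset.mem_range, Finset.mem_Ioc] at hx'
          obtain ⟨i, hi, h1, h2⟩ := hx'
          have : m i ≤ m n := hm (by omega)
          omega
        have d2 : Disjoint (Finset.Ioc (j (n + 1)) (B + m (n + 1)))
            ((Finset.range (n + 1)).biUnion fun i => Finset.Ioc (j i) (B + m i)) := by
          rw [Finset.disjoint_left]
          intro x hx hx'
          obtain ⟨hx1, hx2⟩ := Finset.mem_Ioc.mp hx
          simp only [Finset.mem_biUnion, Finset.mem_range, Finset.mem_Ioc] at hx'
          obtain ⟨i, hi, h1, h2⟩ := hx'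
          have : m i ≤ m n := hm (by omega)
          omega
        rw [Finset.range_add_one, Finset.biUnion_insert, Finset.biUnion_insert,
          Finset.sum_union d1, Finset.sum_union d2]
        exact add_le_add (gs_single N A B f g hg hfN hgN H1 H2 (j (n + 1)) (m (n + 1)))
          (IH j m hj hm)
/-- For a conservative system (only jump rates `gl` for the lower process and `gu` for the
upper one, all birth and death rates zero), with `α ≤ γ`, `β ≤ δ` and finitely supported
nonnegative jump rates, the Gobron–Saada conditions (A) are equivalent to the specialization
(B) of Conditions (C+) and (C−). -/
theorem conservative_conditions_equiv
    (α β γ δ : ℕ) (hαγ : α ≤ γ) (hβδ : β ≤ δ)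
    (gl gu : ℕ → ℝ)
    (hgl0 : ∀ k, 0 ≤ gl k) (hgu0 : ∀ k, 0 ≤ gu k)
    (hglfin : ∃ N, ∀ k, N ≤ k → gl k = 0) (hgufin : ∃ N, ∀ k, N ≤ k → gu k = 0) :
    -- (A): for every natural `j`, `Σ_{k > δ−β+j} Γ̃^k ≤ Σ_{l > j} Γ^l`, and
    --      for every natural `h`, `Σ_{k > h} Γ̃^k ≥ Σ_{l > γ−α+h} Γ^l`
    ((∀ j : ℕ,
        (∑' k : ℕ, {k : ℕ | δ - β + j < k}.indicator gl k)
          ≤ (∑' l : ℕ, {l : ℕ | j < l}.indicator gu l))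
      ∧ (∀ h : ℕ,
        (∑' k : ℕ, {k : ℕ | h < k}.indicator gl k)
          ≥ (∑' l : ℕ, {l : ℕ | γ - α + h < l}.indicator gu l)))
    ↔
    -- (B): for every `K ≥ 1` and all nondecreasing `K`-tuples `j, m, h`,
    --      `Σ_{k ∈ I_a} Γ̃^k ≤ Σ_{l ∈ I_b} Γ^l` and `Σ_{k ∈ I_d} Γ̃^k ≥ Σ_{l ∈ I_c} Γ^l`
    (∀ (K : ℕ), 1 ≤ K → ∀ (j m h : Fin K → ℕ),
        Monotone j → Monotone m → Monotone h →
        ((∑' k : ℕ, {k : ℕ | ∃ i : Fin K, k ≤ m i ∧ δ - β + j i < k}.indicator gl k)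
            ≤ (∑' l : ℕ, {l : ℕ | ∃ i : Fin K, l ≤ γ - α + m i ∧ j i < l}.indicator gu l))
          ∧ ((∑' k : ℕ, {k : ℕ | ∃ i : Fin K, k ≤ δ - β + m i ∧ h i < k}.indicator gl k)
            ≥ (∑' l : ℕ, {l : ℕ | ∃ i : Fin K, l ≤ m i ∧ γ - α + h i < l}.indicator gu l))) := by
  classical
  obtain ⟨N1, hN1⟩ := hglfin
  obtain ⟨N2, hN2⟩ := hgufin
  set A := δ - β with hA
  set B := γ - α with hB
  set N := max N1 N2 with hN
  have hglN : ∀ k, N ≤ k → gl k = 0 := fun k hk => hN1 k (le_trans (le_max_left _ _) hk)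
  have hguN : ∀ k, N ≤ k → gu k = 0 := fun k hk => hN2 k (le_trans (le_max_right _ _) hk)
  -- conversion of tail tsums to finite sums
  have tl : ∀ (f : ℕ → ℝ), (∀ k, N ≤ k → f k = 0) → ∀ (c : ℕ),
      (∑' k : ℕ, {k : ℕ | c < k}.indicator f k) = ∑ k ∈ Finset.Ioc c N, f k := by
    intro f hfN c
    apply gs_tsum_indicator_eq_sum
    · intro k hk hne
      have hk' : c < k := hk
      have : k < N := by
        by_contra hcon
        exact hne (hfN k (by omega))
      exact Finset.mem_Ioc.mpr ⟨hk', by omega⟩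
    · intro k hk
      exact (Finset.mem_Ioc.mp hk).1
  constructor
  · rintro ⟨HA1, HA2⟩
    have H1 : ∀ x, ∑ k ∈ Finset.Ioc (A + x) N, gl k ≤ ∑ k ∈ Finset.Ioc x N, gu k := by
      intro x
      rw [← tl gl hglN, ← tl gu hguN]
      exact HA1 x
    have H2 : ∀ x, ∑ k ∈ Finset.Ioc (B + x) N, gu k ≤ ∑ k ∈ Finset.Ioc x N, gl k := by
      intro x
      rw [← tl gu hguN, ← tl gl hglN]
      exact HA2 x
    intro K hK j m h hj hm hh
    -- extend the tuples to monotone functions on ℕ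
    have extmono : ∀ (u : Fin K → ℕ), Monotone u →
        Monotone (fun i : ℕ => u ⟨min i (K - 1), by omega⟩) := by
      intro u hu a b hab
      exact hu (Fin.mk_le_mk.mpr (min_le_min hab le_rfl))
    have extval : ∀ (u : Fin K → ℕ) (i : ℕ) (hi : i < K),
        (fun i : ℕ => u ⟨min i (K - 1), by omega⟩) i = u ⟨i, hi⟩ := by
      intro u i hi
      exact congrArg u (Fin.mk_eq_mk.mpr (by omega))
    set jj : ℕ → ℕ := fun i : ℕ => j ⟨min i (K - 1), by omega⟩ with hjj
    set mm : ℕ → ℕ := fun i : ℕ => m ⟨min i (K - 1), by omega⟩ with hmm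
    set hhh : ℕ → ℕ := fun i : ℕ => h ⟨min i (K - 1), by omega⟩ with hhhh
    -- conversion of the union tsums to finite sums
    have conv : ∀ (f : ℕ → ℝ) (u v : Fin K → ℕ) (uu vv : ℕ → ℕ),
        (∀ (i : ℕ) (hi : i < K), uu i = u ⟨i, hi⟩) →
        (∀ (i : ℕ) (hi : i < K), vv i = v ⟨i, hi⟩) →
        (∑' k : ℕ, {k : ℕ | ∃ i : Fin K, k ≤ v i ∧ u i < k}.indicator f k)
          = ∑ k ∈ (Finset.range K).biUnion (fun i => Finset.Ioc (uu i) (vv i)), f k := by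
      intro f u v uu vv huu hvv
      apply gs_tsum_indicator_eq_sum
      · rintro k ⟨i, h1, h2⟩ _
        refine Finset.mem_biUnion.mpr ⟨i.1, Finset.mem_range.mpr i.2, Finset.mem_Ioc.mpr ⟨?_, ?_⟩⟩
        · rw [huu i.1 i.2]
          simpa using h2
        · rw [hvv i.1 i.2]
          simpa using h1
      · intro k hk
        obtain ⟨i, hi, hmem⟩ := Finset.mem_biUnion.mp hk
        have hi' := Finset.mem_range.mp hi
        obtain ⟨h1, h2⟩ := Finset.mem_Ioc.mp hmem
        exact ⟨⟨i, hi'⟩, by rw [← hvv i hi']; exact h2, by rw [← huu i hi']; exact h1⟩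
    constructor
    · calc (∑' k : ℕ, {k : ℕ | ∃ i : Fin K, k ≤ m i ∧ A + j i < k}.indicator gl k)
          = ∑ k ∈ (Finset.range K).biUnion (fun i => Finset.Ioc (A + jj i) (mm i)), gl k :=
            conv gl (fun i => A + j i) m (fun i => A + jj i) mm
              (fun i hi => congrArg (fun z => A + z) (extval j i hi)) (fun i hi => extval m i hi)
        _ ≤ ∑ l ∈ (Finset.range K).biUnion (fun i => Finset.Ioc (jj i) (B + mm i)), gu l :=
            gs_core N A B gl gu hgl0 hgu0 hglN hguN H1 H2 K jj mm (extmono j hj) (extmono m hm)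
        _ = (∑' l : ℕ, {l : ℕ | ∃ i : Fin K, l ≤ B + m i ∧ j i < l}.indicator gu l) :=
            (conv gu j (fun i => B + m i) jj (fun i => B + mm i)
              (fun i hi => extval j i hi) (fun i hi => congrArg (fun z => B + z) (extval m i hi))).symm
    · rw [ge_iff_le]
      calc (∑' l : ℕ, {l : ℕ | ∃ i : Fin K, l ≤ m i ∧ B + h i < l}.indicator gu l)
          = ∑ l ∈ (Finset.range K).biUnion (fun i => Finset.Ioc (B + hhh i) (mm i)), gu l :=
            conv gu (fun i => B + h i) m (fun i => B + hhh i) mm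
              (fun i hi => congrArg (fun z => B + z) (extval h i hi)) (fun i hi => extval m i hi)
        _ ≤ ∑ k ∈ (Finset.range K).biUnion (fun i => Finset.Ioc (hhh i) (A + mm i)), gl k :=
            gs_core N B A gu gl hgu0 hgl0 hguN hglN H2 H1 K hhh mm (extmono h hh) (extmono m hm)
        _ = (∑' k : ℕ, {k : ℕ | ∃ i : Fin K, k ≤ A + m i ∧ h i < k}.indicator gl k) :=
            (conv gl h (fun i => A + m i) hhh (fun i => A + mm i)
              (fun i hi => extval h i hi) (fun i hi => congrArg (fun z => A + z) (extval m i hi))).symm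
  · intro HB
    have indeq : ∀ (f : ℕ → ℝ) (s t : Set ℕ), (∀ k, f k ≠ 0 → (k ∈ s ↔ k ∈ t)) →
        (∑' k, s.indicator f k) = ∑' k, t.indicator f k := by
      intro f s t hst
      refine tsum_congr fun k => ?_
      by_cases h0 : f k = 0
      · by_cases h1 : k ∈ s <;> by_cases h2 : k ∈ t <;>
          simp [Set.indicator_of_mem, Set.indicator_of_notMem, h1, h2, h0]
      · have hiff := hst k h0
        by_cases h1 : k ∈ s
        · rw [Set.indicator_of_mem h1, Set.indicator_of_mem (hiff.mp h1)]
        · rw [Set.indicator_of_notMem h1,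
            Set.indicator_of_notMem (fun hc => h1 (hiff.mpr hc))]
    constructor
    · intro x
      have HB1 := (HB 1 le_rfl (fun _ => x) (fun _ => N) (fun _ => 0)
        monotone_const monotone_const monotone_const).1
      have ea : (∑' k : ℕ, {k : ℕ | ∃ i : Fin 1, k ≤ N ∧ A + x < k}.indicator gl k)
          = ∑' k : ℕ, {k : ℕ | A + x < k}.indicator gl k := by
        refine indeq gl _ _ fun k hne => ?_
        have hkN : k < N := by
          by_contra hc
          exact hne (hglN k (by omega))
        simp only [Set.mem_setOf_eq]
        exact ⟨fun ⟨_, _, h2⟩ => h2, fun h2 => ⟨0, by omega, h2⟩⟩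
      have eb : (∑' l : ℕ, {l : ℕ | ∃ i : Fin 1, l ≤ B + N ∧ x < l}.indicator gu l)
          = ∑' l : ℕ, {l : ℕ | x < l}.indicator gu l := by
        refine indeq gu _ _ fun l hne => ?_
        have hlN : l < N := by
          by_contra hc
          exact hne (hguN l (by omega))
        simp only [Set.mem_setOf_eq]
        exact ⟨fun ⟨_, _, h2⟩ => h2, fun h2 => ⟨0, by omega, h2⟩⟩
      rw [← ea, ← eb]
      exact HB1
    · intro x
      have HB2 := (HB 1 le_rfl (fun _ => 0) (fun _ => N) (fun _ => x)
        monotone_const monotone_const monotone_const).2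
      have ea : (∑' k : ℕ, {k : ℕ | ∃ i : Fin 1, k ≤ A + N ∧ x < k}.indicator gl k)
          = ∑' k : ℕ, {k : ℕ | x < k}.indicator gl k := by
        refine indeq gl _ _ fun k hne => ?_
        have hkN : k < N := by
          by_contra hc
          exact hne (hglN k (by omega))
        simp only [Set.mem_setOf_eq]
        exact ⟨fun ⟨_, _, h2⟩ => h2, fun h2 => ⟨0, by omega, h2⟩⟩
      have eb : (∑' l : ℕ, {l : ℕ | ∃ i : Fin 1, l ≤ N ∧ B + x < l}.indicator gu l)
          = ∑' l : ℕ, {l : ℕ | B + x < l}.indicator gu l := by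
        refine indeq gu _ _ fun l hne => ?_
        have hlN : l < N := by
          by_contra hc
          exact hne (hguN l (by omega))
        simp only [Set.mem_setOf_eq]
        exact ⟨fun ⟨_, _, h2⟩ => h2, fun h2 => ⟨0, by omega, h2⟩⟩
      rw [ge_iff_le, ← ea, ← eb]
      exact HB2
end

section
/- Let d, M, M̄ be positive integers and λ, φ, λ̄, φ̄ nonnegative reals with λ ≤ λ̄, φ ≤ φ̄ and M ≤ M̄. Then for all naturals α, β, γ, δ with α ≤ γ, β ≤ δ, α ≤ M, β ≤ M, γ ≤ M̄, δ ≤ M̄, the following two families of inequalities hold, so that the spread-of-tuberculosis model with parameters (λ, φ, M) is stochastically dominated by the one with parameters (λ̄, φ̄, M̄): (i) if β = δ, then φ·β·1_{0 ≤ β ≤ M−1} + 2dλ·α·1_{β = 0} ≤ φ̄·δ·1_{0 ≤ δ ≤ M̄−1} + 2dλ̄·γ·1_{δ = 0}; (ii) for every natural h₁, 1_{1 ≤ α ≤ M and α > h₁} ≥ 1_{1 ≤ γ ≤ M̄ and γ > γ−α+h₁}. -/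
/-- Comparison of two spread-of-tuberculosis models with parameters `(λ, φ, M)` and
`(λ̄, φ̄, M̄)`: if `λ ≤ λ̄`, `φ ≤ φ̄` and `M ≤ M̄`, then for all admissible `(α,β) ≤ (γ,δ)`
the two families of rate inequalities (i) and (ii) hold. -/
theorem tuberculosis_comparison
    (d M M' : ℕ) (hd : 1 ≤ d) (hM : 1 ≤ M) (hM' : 1 ≤ M')
    (lam phi lam' phi' : ℝ)
    (hlam : 0 ≤ lam) (hphi : 0 ≤ phi) (hlam' : 0 ≤ lam') (hphi' : 0 ≤ phi')
    (hll : lam ≤ lam') (hpp : phi ≤ phi') (hMM : M ≤ M') :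
    ∀ α β γ δ : ℕ, α ≤ γ → β ≤ δ → α ≤ M → β ≤ M → γ ≤ M' → δ ≤ M' →
      -- (i): if β = δ then
      -- φ·β·1_{0 ≤ β ≤ M−1} + 2dλ·α·1_{β = 0} ≤ φ̄·δ·1_{0 ≤ δ ≤ M̄−1} + 2dλ̄·γ·1_{δ = 0}
      ((β = δ →
        phi * (β : ℝ) * (if β ≤ M - 1 then 1 else 0)
            + 2 * (d : ℝ) * lam * (α : ℝ) * (if β = 0 then 1 else 0)
          ≤ phi' * (δ : ℝ) * (if δ ≤ M' - 1 then 1 else 0)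
            + 2 * (d : ℝ) * lam' * (γ : ℝ) * (if δ = 0 then 1 else 0))
      -- (ii): for every natural h₁,
      -- 1_{1 ≤ α ≤ M and α > h₁} ≥ 1_{1 ≤ γ ≤ M̄ and γ > γ−α+h₁}
      ∧ (∀ h₁ : ℕ,
          (if 1 ≤ α ∧ α ≤ M ∧ h₁ < α then (1 : ℝ) else 0)
            ≥ (if 1 ≤ γ ∧ γ ≤ M' ∧ γ - α + h₁ < γ then (1 : ℝ) else 0))) := by
  intro α β γ δ hag hbd haM hbM hgM hdM
  constructor
  · intro hbeq
    subst hbeq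
    rcases Nat.eq_zero_or_pos β with h0 | h0
    · subst h0
      norm_num
      have hcast : (α : ℝ) ≤ γ := by exact_mod_cast hag
      have hd0 : (0:ℝ) ≤ d := Nat.cast_nonneg d
      nlinarith [mul_le_mul hll hcast (Nat.cast_nonneg α) hlam']
    · have h1 : ¬ β = 0 := by omega
      simp only [if_neg h1, mul_zero, add_zero]
      by_cases hb : β ≤ M - 1
      · rw [if_pos hb, if_pos (show β ≤ M' - 1 by omega)]
        have hb0 : (0:ℝ) ≤ (β:ℝ) := Nat.cast_nonneg β
        nlinarith
      · rw [if_neg hb]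
        simp only [mul_zero]
        split <;> positivity
  · intro h₁
    by_cases hr : 1 ≤ γ ∧ γ ≤ M' ∧ γ - α + h₁ < γ
    · rw [if_pos hr, if_pos (by omega)]
    · rw [if_neg hr]
      split <;> norm_num
end

section
/- Let d ≥ 1, M ≥ 1 be integers, λ, β ≥ 0 reals and 0 ≤ φ < 1 with max(λ, β) < (1−φ) / (2d(1−φ^M)). Then for every U > 0 there exist ε > 0 and reals u_0, u_1, …, u_M with u_0 = U and u_l > 0 for every 0 ≤ l ≤ M, which satisfy the u-criterion inequality with parameter ε. -/
/-- The sequence `u_0, …, u_M` satisfies the u-criterion inequality with parameter `ε`: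
for every `1 ≤ l ≤ M`,
`φ·l·u_l − l·u_{l−1} ≤ −ε·Σ_{j=0}^{l−1} u_j − ū·max(λ,β)·2d·l`,
where `ū = max_{0 ≤ j ≤ M} u_j`. -/
def UCriterion (d M : ℕ) (lam bet phi ε : ℝ) (u : ℕ → ℝ) : Prop :=
  ∀ l : ℕ, 1 ≤ l → l ≤ M →
    phi * (l : ℝ) * u l - (l : ℝ) * u (l - 1) ≤
      -ε * (∑ j ∈ Finset.range l, u j)
        - ((Finset.range (M + 1)).sup' (by simp) u) * max lam bet * (2 * (d : ℝ)) * (l : ℝ)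

set_option maxHeartbeats 1000000 in
/-- Ergodicity criterion for the individual recovery epidemic model: if `φ < 1` and
`max(λ, β) < (1−φ) / (2d(1−φ^M))`, then for every `U > 0` there exist `ε > 0` and reals
`u_0, …, u_M` with `u_0 = U`, all positive, satisfying the u-criterion inequality with
parameter `ε`. -/
theorem u_criterion_satisfiable
    (d M : ℕ) (hd : 1 ≤ d) (hM : 1 ≤ M)
    (lam bet phi : ℝ) (hlam : 0 ≤ lam) (hbet : 0 ≤ bet)
    (hphi0 : 0 ≤ phi) (hphi1 : phi < 1)
    (hmain : max lam bet < (1 - phi) / (2 * (d : ℝ) * (1 - phi ^ M))) :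
    ∀ U : ℝ, 0 < U →
      ∃ ε : ℝ, 0 < ε ∧ ∃ u : ℕ → ℝ,
        u 0 = U ∧ (∀ l ≤ M, 0 < u l) ∧ UCriterion d M lam bet phi ε u := by
  intro U hU
  set c : ℝ := max lam bet with hc_def
  have hc0 : 0 ≤ c := le_trans hlam (le_max_left _ _)
  have hd0 : (1:ℝ) ≤ (d:ℝ) := by exact_mod_cast hd
  have hφM : phi ^ M < 1 := pow_lt_one₀ hphi0 hphi1 (by omega)
  have h1φM : (0:ℝ) < 1 - phi ^ M := by linarith
  have hden : 0 < 2 * (d : ℝ) * (1 - phi ^ M) := by positivity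
  have hmain' : c * (2 * (d : ℝ) * (1 - phi ^ M)) < 1 - phi := by
    rw [← lt_div_iff₀ hden]; exact hmain
  rcases eq_or_lt_of_le hphi0 with hφ0 | hφpos
  · -- phi = 0 : constant sequence
    have hφ : phi = 0 := hφ0.symm
    have hM0 : phi ^ M = 0 := by rw [hφ]; exact zero_pow (by omega)
    have hc1 : 2 * (d:ℝ) * c < 1 := by
      have := hmain'
      rw [hM0, hφ] at this
      nlinarith
    refine ⟨(1 - 2 * d * c) / 2, by nlinarith, fun _ => U, rfl, fun l _ => hU, ?_⟩
    intro l hl1 hlM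
    have hsup : ((Finset.range (M + 1)).sup' (by simp) (fun _ => U)) = U :=
      Finset.sup'_const _ U
    have hsum : (∑ _j ∈ Finset.range l, U) = (l : ℝ) * U := by
      simp [Finset.sum_const, mul_comm]
    rw [hsup, hsum, hφ]
    have hl : (1:ℝ) ≤ (l:ℝ) := by exact_mod_cast hl1
    simp only [← hc_def]
    nlinarith [mul_nonneg (by linarith : (0:ℝ) ≤ 1 - 2*d*c)
      (mul_nonneg (by linarith : (0:ℝ) ≤ (l:ℝ)) hU.le)]
  · -- phi > 0
    have h1φ : (0:ℝ) < 1 - phi := by linarith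
    set a : ℝ := (max U (2 * d * c * U / (1 - phi)) + U / (1 - phi ^ M)) / 2 with ha_def
    have hkey1 : U < U / (1 - phi ^ M) := by
      rw [lt_div_iff₀ h1φM]
      nlinarith [pow_pos hφpos M]
    have hkey2 : 2 * d * c * U / (1 - phi) < U / (1 - phi ^ M) := by
      rw [div_lt_div_iff₀ h1φ h1φM]
      nlinarith
    have haU : U < a := by
      have := le_max_left U (2 * d * c * U / (1 - phi))
      simp only [ha_def]
      cases' max_cases U (2 * d * c * U / (1 - phi)) with h h <;> rw [h.1] <;> linarith
    have ha2 : 2 * d * c * U / (1 - phi) < a := by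
      simp only [ha_def]
      cases' max_cases U (2 * d * c * U / (1 - phi)) with h h <;> rw [h.1] <;> linarith
    have ha3 : a < U / (1 - phi ^ M) := by
      simp only [ha_def]
      cases' max_cases U (2 * d * c * U / (1 - phi)) with h h <;> rw [h.1] <;> linarith
    have ha0 : 0 < a := lt_trans hU haU
    have hacU : 2 * d * c * U < a * (1 - phi) := by
      rw [div_lt_iff₀ h1φ] at ha2; linarith
    have haM : a * (1 - phi ^ M) < U := by
      rw [lt_div_iff₀ h1φM] at ha3; linarith
    set b : ℝ := a - U with hb_def
    have hb0 : 0 < b := by simp [hb_def]; linarith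
    set u : ℕ → ℝ := fun l => a - b / phi ^ l with hu_def
    have hu0 : u 0 = U := by simp [hu_def, hb_def]
    have hmono : ∀ j l : ℕ, j ≤ l → u l ≤ u j := by
      intro j l hjl
      have hpl : 0 < phi ^ l := pow_pos hφpos l
      have hpj : 0 < phi ^ j := pow_pos hφpos j
      have : phi ^ l ≤ phi ^ j := pow_le_pow_of_le_one hphi0 hphi1.le hjl
      have : b / phi ^ j ≤ b / phi ^ l := div_le_div_of_nonneg_left hb0.le hpl this
      simp only [hu_def]; linarith
    have huM : 0 < u M := by
      have hpM : 0 < phi ^ M := pow_pos hφpos M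
      simp only [hu_def]
      rw [sub_pos, div_lt_iff₀ hpM]
      nlinarith
    have hupos : ∀ l ≤ M, 0 < u l := fun l hl => lt_of_lt_of_le huM (hmono l M hl)
    have huleU : ∀ l, u l ≤ U := by
      intro l; rw [← hu0]; exact hmono 0 l (Nat.zero_le l)
    have hsup : ((Finset.range (M + 1)).sup' (by simp) u) = U := by
      apply le_antisymm
      · exact Finset.sup'_le _ _ fun j _ => huleU j
      · rw [← hu0]
        exact Finset.le_sup' u (by simp : 0 ∈ Finset.range (M + 1))
    refine ⟨(a * (1 - phi) - 2 * d * c * U) / U, div_pos (by linarith) hU, u, hu0, hupos, ?_⟩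
    intro l hl1 hlM
    obtain ⟨k, rfl⟩ := Nat.exists_eq_add_of_le hl1
    set l := 1 + k
    have hlk : l - 1 = k := by omega
    have hsum : (∑ j ∈ Finset.range l, u j) ≤ (l : ℝ) * U := by
      calc (∑ j ∈ Finset.range l, u j) ≤ ∑ _j ∈ Finset.range l, U :=
            Finset.sum_le_sum fun j _ => huleU j
        _ = (l : ℝ) * U := by simp [mul_comm]
    have hkeyid : phi * u l - u (l - 1) = -(a * (1 - phi)) := by
      have hpk : (phi:ℝ) ^ k ≠ 0 := (pow_pos hφpos k).ne'
      simp only [hu_def, hlk]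
      have : phi ^ l = phi * phi ^ k := by
        rw [show l = k + 1 by omega, pow_succ]; ring
      rw [this]
      field_simp
      ring
    rw [hsup]
    have hl0 : (1:ℝ) ≤ (l:ℝ) := by exact_mod_cast hl1
    have hmain2 : phi * (l:ℝ) * u l - (l:ℝ) * u (l - 1) = (l:ℝ) * (-(a * (1-phi))) := by
      rw [← hkeyid]; ring
    rw [hmain2]
    have hε0 : 0 ≤ (a * (1 - phi) - 2 * d * c * U) / U := by
      apply div_nonneg (by linarith) hU.le
    have h1 : (a * (1 - phi) - 2 * d * c * U) / U * (∑ j ∈ Finset.range l, u j)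
        ≤ (a * (1 - phi) - 2 * d * c * U) * (l:ℝ) := by
      calc (a * (1 - phi) - 2 * d * c * U) / U * (∑ j ∈ Finset.range l, u j)
          ≤ (a * (1 - phi) - 2 * d * c * U) / U * ((l:ℝ) * U) :=
            mul_le_mul_of_nonneg_left hsum hε0
        _ = (a * (1 - phi) - 2 * d * c * U) * (l:ℝ) := by
            field_simp
    rw [← hc_def]
    linarith [h1]
end

section
/- Let d ≥ 1, M ≥ 1 be integers, U > 0, φ ∈ (0,1), and λ, β ≥ 0 with (1−φ)/(2d) < max(λ,β) < (1−φ)/(2d(1−φ^M)). Then there exists ε̄ > 0 such that for every ε with 0 < ε ≤ ε̄ and every 0 ≤ l ≤ M: u_l(ε) > 0; u_l(ε) < u_{l−1}(ε) for 1 ≤ l ≤ M (u is decreasing in l); and for each fixed l the function ε ↦ u_l(ε) is decreasing on (0, ε̄]. -/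
/-!
Each `u_l(ε)` is a polynomial in `ε`. At `ε = 0` the recursion is affine,
`u_l(0) = v - (v - U) / φ^l` with `v = A / (1 - φ)` and `A = 2dU·max(λ,β)`: the lower bound on
`max(λ,β)` says `U < v`, so `u_l(0)` strictly decreases in `l`, and the upper bound says
`u_M(0) > 0`. Differentiating the recursion at `ε = 0` gives `u_l'(0) < 0` for `l ≥ 1`, because the
partial sums of the positive `u_j(0)` enter with a minus sign. These finitely many strict
inequalities persist near `ε = 0` by continuity.
-/

open Polynomial Finset Filter Topology

theorem Polynomial.antitoneOn_eval_of_derivative_nonpos {p : ℝ[X]} {s : Set ℝ} (hs : Convex ℝ s)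
    (hp : ∀ x ∈ interior s, (derivative p).eval x ≤ 0) : AntitoneOn (fun x => p.eval x) s :=
  antitoneOn_of_deriv_nonpos hs p.continuousOn p.differentiableOn (by simpa using hp)

/-- `u_l` as a polynomial in `ε`, where `A` stands for `U·max(λ,β)·2d`. -/
noncomputable def uPoly (φ U A : ℝ) : ℕ → ℝ[X]
  | 0 => C U
  | l + 1 => C (φ * (l + 1))⁻¹ *
      (-X * ∑ j : Fin (l + 1), uPoly φ U A j - C (A * (l + 1)) + C ((l : ℝ) + 1) * uPoly φ U A l)

section uPoly

variable (φ U A : ℝ)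

theorem uPoly_zero : uPoly φ U A 0 = C U := by
  rw [uPoly]

theorem uPoly_succ (l : ℕ) :
    uPoly φ U A (l + 1) = C (φ * (l + 1))⁻¹ *
      (-X * ∑ j ∈ range (l + 1), uPoly φ U A j - C (A * (l + 1)) +
        C ((l : ℝ) + 1) * uPoly φ U A l) := by
  rw [uPoly, Fin.sum_univ_eq_sum_range (fun j => uPoly φ U A j)]

theorem eval_uPoly_succ (ε : ℝ) (l : ℕ) :
    (uPoly φ U A (l + 1)).eval ε = (φ * (l + 1))⁻¹ *
      (-ε * ∑ j ∈ range (l + 1), (uPoly φ U A j).eval ε - A * (l + 1) +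
        (l + 1) * (uPoly φ U A l).eval ε) := by
  simp [uPoly_succ, eval_finsetSum]

theorem eval_zero_uPoly_succ (l : ℕ) :
    (uPoly φ U A (l + 1)).eval 0 = ((uPoly φ U A l).eval 0 - A) / φ := by
  rw [eval_uPoly_succ]
  field_simp
  ring

theorem eval_zero_derivative_uPoly_succ (l : ℕ) :
    (derivative (uPoly φ U A (l + 1))).eval 0 = (φ * (l + 1))⁻¹ *
      (-∑ j ∈ range (l + 1), (uPoly φ U A j).eval 0 +
        (l + 1) * (derivative (uPoly φ U A l)).eval 0) := by
  simp [uPoly_succ, eval_finsetSum]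

theorem eval_uPoly_eq_of_rec {M : ℕ} {ε : ℝ} {v : ℕ → ℝ} (h0 : v 0 = U)
    (hrec : ∀ l : ℕ, 1 ≤ l → l ≤ M →
      v l = (1 / (φ * l)) * (-ε * ∑ j ∈ range l, v j - A * l + l * v (l - 1))) :
    ∀ l ≤ M, v l = (uPoly φ U A l).eval ε := by
  intro l
  induction l using Nat.strong_induction_on with
  | _ l ih =>
    intro hl
    rcases l with _ | l
    · simp [h0, uPoly_zero]
    · rw [hrec (l + 1) l.succ_pos hl, eval_uPoly_succ, ← ih l l.lt_succ_self (by omega)]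
      rw [sum_congr rfl fun j hj => ih j (mem_range.1 hj) (by have := mem_range.1 hj; omega)]
      push_cast
      simp [one_div]

theorem eval_zero_uPoly {φ : ℝ} (hφ₀ : φ ≠ 0) (hφ₁ : φ ≠ 1) (l : ℕ) :
    (uPoly φ U A l).eval 0 = A / (1 - φ) - (A / (1 - φ) - U) / φ ^ l := by
  have : 1 - φ ≠ 0 := sub_ne_zero.2 hφ₁.symm
  induction l with
  | zero => simp [uPoly_zero]
  | succ l ih =>
    rw [eval_zero_uPoly_succ, ih]
    field_simp
    ring

theorem strictAnti_eval_zero_uPoly {φ : ℝ} (hφ : φ ∈ Set.Ioo 0 1) (hA : U * (1 - φ) < A) :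
    StrictAnti fun l => (uPoly φ U A l).eval 0 := by
  obtain ⟨hφ₀, hφ₁⟩ := hφ
  have hgap : 0 < A / (1 - φ) - U := by
    rw [sub_pos, lt_div_iff₀ (by linarith)]
    exact hA
  intro l m hlm
  simp only [eval_zero_uPoly U A hφ₀.ne' hφ₁.ne]
  exact sub_lt_sub_left (div_lt_div_of_pos_left hgap (pow_pos hφ₀ m)
    (pow_lt_pow_right_of_lt_one₀ hφ₀ hφ₁ hlm)) _

theorem eval_zero_uPoly_pos {φ : ℝ} {M : ℕ} (hφ : φ ∈ Set.Ioo 0 1) (hA : U * (1 - φ) < A)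
    (hAM : A * (1 - φ ^ M) < U * (1 - φ)) {l : ℕ} (hl : l ≤ M) :
    0 < (uPoly φ U A l).eval 0 := by
  refine lt_of_lt_of_le ?_ ((strictAnti_eval_zero_uPoly U A hφ hA).antitone hl)
  obtain ⟨hφ₀, hφ₁⟩ := hφ
  rw [eval_zero_uPoly U A hφ₀.ne' hφ₁.ne, sub_pos, div_lt_iff₀ (by positivity),
    div_sub' (by linarith), div_mul_eq_mul_div, div_lt_div_iff_of_pos_right (by linarith)]
  linarith

theorem eval_zero_derivative_uPoly_succ_neg {φ : ℝ} (hφ : 0 < φ) {l : ℕ}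
    (hpos : ∀ j ≤ l, 0 < (uPoly φ U A j).eval 0) :
    (derivative (uPoly φ U A (l + 1))).eval 0 < 0 := by
  induction l with
  | zero =>
    simpa [eval_zero_derivative_uPoly_succ, uPoly_zero, hφ] using hpos 0 le_rfl
  | succ l ih =>
    have hD : (derivative (uPoly φ U A (l + 1))).eval 0 < 0 :=
      ih fun j hj => hpos j (by omega)
    have hS : 0 < ∑ j ∈ range (l + 2), (uPoly φ U A j).eval 0 :=
      sum_pos (fun j hj => hpos j (by have := mem_range.1 hj; omega)) nonempty_range_add_one
    rw [eval_zero_derivative_uPoly_succ]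
    refine mul_neg_of_pos_of_neg (by positivity) ?_
    push_cast
    nlinarith

theorem eventually_nhds_zero_uPoly {φ : ℝ} {M : ℕ} (hφ : φ ∈ Set.Ioo 0 1)
    (hA : U * (1 - φ) < A) (hAM : A * (1 - φ ^ M) < U * (1 - φ)) :
    ∀ᶠ ε in 𝓝 0, ∀ l ≤ M, 0 < (uPoly φ U A l).eval ε ∧
      (1 ≤ l → (uPoly φ U A l).eval ε < (uPoly φ U A (l - 1)).eval ε) ∧
      (derivative (uPoly φ U A l)).eval ε ≤ 0 := by
  refine (eventually_all_finite (Set.finite_le_nat M)).2 fun l hl => ?_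
  have hcont (q : ℝ[X]) : ContinuousAt (fun ε => q.eval ε) 0 := q.continuous.continuousAt
  have hpos := continuousAt_const.eventually_lt (hcont _) (eval_zero_uPoly_pos U A hφ hA hAM hl)
  rcases l with _ | l
  · refine hpos.mono fun ε hε => ⟨hε, by omega, by simp [uPoly_zero]⟩
  · have hlt := (hcont _).eventually_lt (hcont _)
      (strictAnti_eval_zero_uPoly U A hφ hA l.lt_succ_self)
    have hder := (hcont _).eventually_lt continuousAt_const
      (eval_zero_derivative_uPoly_succ_neg U A hφ.1
        fun j hj => eval_zero_uPoly_pos U A hφ hA hAM (hj.trans (Nat.le_of_succ_le hl)))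
    filter_upwards [hpos, hlt, hder] with ε hε₁ hε₂ hε₃
    exact ⟨hε₁, fun _ => hε₂, hε₃.le⟩

end uPoly

theorem u_sequence_positive_decreasing_general
    (d M : ℕ) (hd : 1 ≤ d) (hM : 1 ≤ M)
    (U : ℝ) (hU : 0 < U)
    (phi : ℝ) (hphi : phi ∈ Set.Ioo (0 : ℝ) 1)
    (lam bet : ℝ)
    (hlow : (1 - phi) / (2 * (d : ℝ)) < max lam bet)
    (hhigh : max lam bet < (1 - phi) / (2 * (d : ℝ) * (1 - phi ^ M)))
    (u : ℝ → ℕ → ℝ)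
    (hu0 : ∀ ε : ℝ, 0 < ε → u ε 0 = U)
    (hurec : ∀ ε : ℝ, 0 < ε → ∀ l : ℕ, 1 ≤ l → l ≤ M →
      u ε l = (1 / (phi * (l : ℝ))) *
        (-ε * (∑ j ∈ Finset.range l, u ε j)
          - U * max lam bet * (2 * (d : ℝ)) * (l : ℝ) + (l : ℝ) * u ε (l - 1))) :
    ∃ εb : ℝ, 0 < εb ∧
      (∀ ε : ℝ, 0 < ε → ε ≤ εb → ∀ l ≤ M, 0 < u ε l) ∧
      (∀ ε : ℝ, 0 < ε → ε ≤ εb → ∀ l : ℕ, 1 ≤ l → l ≤ M → u ε l < u ε (l - 1)) ∧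
      (∀ l ≤ M, AntitoneOn (fun ε => u ε l) (Set.Ioc 0 εb)) := by
  set A := U * max lam bet * (2 * (d : ℝ))
  have hd₀ : (0 : ℝ) < 2 * d := by positivity
  have hM₀ : 0 < 1 - phi ^ M := sub_pos.2 (pow_lt_one₀ hphi.1.le hphi.2 (by omega))
  have hA : U * (1 - phi) < A := by
    rw [div_lt_iff₀ hd₀] at hlow
    nlinarith
  have hAM : A * (1 - phi ^ M) < U * (1 - phi) := by
    rw [lt_div_iff₀ (by positivity)] at hhigh
    nlinarith
  have hu (ε : ℝ) (hε : 0 < ε) : ∀ l ≤ M, u ε l = (uPoly phi U A l).eval ε :=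
    eval_uPoly_eq_of_rec phi U A (hu0 ε hε) (hurec ε hε)
  obtain ⟨δ, hδ, hball⟩ :=
    Metric.eventually_nhds_iff_ball.1 (eventually_nhds_zero_uPoly U A hphi hA hAM)
  have hsub : Set.Ioc 0 (δ / 2) ⊆ Metric.ball 0 δ := fun ε hε => by
    rw [Metric.mem_ball, Real.dist_eq, sub_zero, abs_of_pos hε.1]
    linarith [hε.2]
  refine ⟨δ / 2, half_pos hδ, fun ε hε hεδ l hl => ?_, fun ε hε hεδ l hl₁ hl => ?_, fun l hl => ?_⟩
  · rw [hu ε hε l hl]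
    exact (hball ε (hsub ⟨hε, hεδ⟩) l hl).1
  · rw [hu ε hε l hl, hu ε hε (l - 1) (by omega)]
    exact (hball ε (hsub ⟨hε, hεδ⟩) l hl).2.1 hl₁
  · exact (((uPoly phi U A l).antitoneOn_eval_of_derivative_nonpos (convex_ball 0 δ)
      fun x hx => (hball x (interior_subset hx) l hl).2.2).mono hsub).congr
      fun ε hε => (hu ε hε.1 l hl).symm

/-- Properties of the recursively defined sequence `u_l(ε)`:
`u_0(ε) = U` and `u_l(ε) = (1/(φl))·(−ε·Σ_{j=0}^{l−1} u_j(ε) − U·max(λ,β)·2d·l + l·u_{l−1}(ε))`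
for `1 ≤ l ≤ M`.  If `(1−φ)/(2d) < max(λ,β) < (1−φ)/(2d(1−φ^M))`, then there is `ε̄ > 0`
such that for all `0 < ε ≤ ε̄` and `0 ≤ l ≤ M`: `u_l(ε) > 0`, `u_l(ε) < u_{l−1}(ε)` for
`1 ≤ l ≤ M`, and for each fixed `l` the map `ε ↦ u_l(ε)` is decreasing on `(0, ε̄]`. -/
theorem u_sequence_positive_decreasing
    (d M : ℕ) (hd : 1 ≤ d) (hM : 1 ≤ M)
    (U : ℝ) (hU : 0 < U)
    (phi : ℝ) (hphi : phi ∈ Set.Ioo (0 : ℝ) 1)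
    (lam bet : ℝ) (hlam : 0 ≤ lam) (hbet : 0 ≤ bet)
    (hlow : (1 - phi) / (2 * (d : ℝ)) < max lam bet)
    (hhigh : max lam bet < (1 - phi) / (2 * (d : ℝ) * (1 - phi ^ M)))
    (u : ℝ → ℕ → ℝ)
    (hu0 : ∀ ε : ℝ, 0 < ε → u ε 0 = U)
    (hurec : ∀ ε : ℝ, 0 < ε → ∀ l : ℕ, 1 ≤ l → l ≤ M →
      u ε l = (1 / (phi * (l : ℝ))) *
        (-ε * (∑ j ∈ Finset.range l, u ε j)
          - U * max lam bet * (2 * (d : ℝ)) * (l : ℝ) + (l : ℝ) * u ε (l - 1))) :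
    ∃ εb : ℝ, 0 < εb ∧
      (∀ ε : ℝ, 0 < ε → ε ≤ εb → ∀ l ≤ M, 0 < u ε l) ∧
      (∀ ε : ℝ, 0 < ε → ε ≤ εb → ∀ l : ℕ, 1 ≤ l → l ≤ M → u ε l < u ε (l - 1)) ∧
      (∀ l ≤ M, AntitoneOn (fun ε => u ε l) (Set.Ioc 0 εb)) :=
  u_sequence_positive_decreasing_general d M hd hM U hU phi hphi lam bet hlow hhigh u hu0 hurec
end

section
/- Let d ≥ 1, M ≥ 1 be integers, U > 0, φ ∈ (0,1), λ, β ≥ 0 with max(λ,β) > 0, and let 1 ≤ l ≤ M. Suppose max(λ,β) < (1−φ)/(2d(1−φ^l)), and suppose there exists ε̄ > 0 such that u_k(ε) > 0 for every 0 ≤ k ≤ l−1 and every 0 < ε ≤ ε̄. Then there exists ε* with 0 < ε* ≤ ε̄ such that U < u_{l−1}(ε*) / (2d·max(λ,β)). -/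
/-!
At `ε = 0` the recursion collapses to `v_n = (v_{n-1} - c)/φ` with `c = 2d·U·max(λ,β)`,
whose closed form `v_n φ^n (1 - φ) = U(1 - φ) - c(1 - φ^n)` shows that the hypothesis on
`max(λ,β)` says exactly `v_l > 0`, i.e. `c < v_{l-1}`. Each `u_n(ε)` depends continuously on `ε`
through finitely many sums and products of earlier terms, so `u_{l-1}(ε) → v_{l-1}` as
`ε → 0⁺`, and any small enough `ε*` works.
-/

open Filter Topology

noncomputable def driftSeq (φ c U : ℝ) : ℕ → ℝ
  | 0 => U
  | n + 1 => (driftSeq φ c U n - c) / φ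

namespace driftSeq

theorem mul_pow_mul_one_sub {φ : ℝ} (c U : ℝ) (hφ : φ ≠ 0) (n : ℕ) :
    driftSeq φ c U n * φ ^ n * (1 - φ) = U * (1 - φ) - c * (1 - φ ^ n) := by
  induction n with
  | zero => simp [driftSeq]
  | succ n ih =>
    rw [driftSeq, pow_succ]
    field_simp
    linear_combination ih

theorem lt_of_mul_one_sub_pow_lt {φ c U : ℝ} (hφ0 : 0 < φ) (hφ1 : φ < 1) {n : ℕ}
    (h : c * (1 - φ ^ (n + 1)) < U * (1 - φ)) : c < driftSeq φ c U n := by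
  have hpos : 0 < driftSeq φ c U (n + 1) * φ ^ (n + 1) * (1 - φ) := by
    rw [mul_pow_mul_one_sub c U hφ0.ne']
    linarith
  have hsucc : 0 < driftSeq φ c U (n + 1) :=
    pos_of_mul_pos_left (pos_of_mul_pos_left hpos (sub_pos.2 hφ1).le) (by positivity)
  rw [driftSeq, div_pos_iff_of_pos_right hφ0] at hsucc
  linarith

end driftSeq

theorem tendsto_driftSeq_of_rec {φ c U : ℝ} (hφ : φ ≠ 0) {N : ℕ} {u : ℝ → ℕ → ℝ}
    (h0 : ∀ ε : ℝ, 0 < ε → u ε 0 = U)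
    (hrec : ∀ ε : ℝ, 0 < ε → ∀ n : ℕ, 1 ≤ n → n ≤ N →
      u ε n = (1 / (φ * (n : ℝ))) *
        (-ε * (∑ j ∈ Finset.range n, u ε j) - c * (n : ℝ) + (n : ℝ) * u ε (n - 1)))
    (n : ℕ) (hn : n ≤ N) :
    Tendsto (fun ε => u ε n) (𝓝[>] 0) (𝓝 (driftSeq φ c U n)) := by
  induction n using Nat.strong_induction_on with
  | _ n ih =>
    cases n with
    | zero =>
      exact tendsto_const_nhds.congr' <|
        eventually_nhdsWithin_of_forall fun ε hε => (h0 ε hε).symm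
    | succ n =>
      have hsum : Tendsto (fun ε => ∑ j ∈ Finset.range (n + 1), u ε j) (𝓝[>] 0)
          (𝓝 (∑ j ∈ Finset.range (n + 1), driftSeq φ c U j)) :=
        tendsto_finsetSum _ fun j hj => by
          have hjn := Finset.mem_range.1 hj
          exact ih j hjn (by omega)
      have hε : Tendsto (fun ε : ℝ => ε) (𝓝[>] 0) (𝓝 0) := nhdsWithin_le_nhds
      have hlim := (((hε.neg.mul hsum).sub_const (c * ((n + 1 : ℕ) : ℝ))).add
        ((ih n (by omega) (by omega)).const_mul ((n + 1 : ℕ) : ℝ))).const_mul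
        (1 / (φ * ((n + 1 : ℕ) : ℝ)))
      have hval : 1 / (φ * ((n + 1 : ℕ) : ℝ)) * (-0 * (∑ j ∈ Finset.range (n + 1),
          driftSeq φ c U j) - c * ((n + 1 : ℕ) : ℝ) + ((n + 1 : ℕ) : ℝ) * driftSeq φ c U n) =
          driftSeq φ c U (n + 1) := by
        rw [driftSeq]
        field_simp
        ring
      rw [hval] at hlim
      exact hlim.congr' <| eventually_nhdsWithin_of_forall fun ε hε =>
        (hrec ε hε (n + 1) (by omega) hn).symm

theorem u_criterion_technical_bound_general
    (d M : ℕ) (hd : 1 ≤ d)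
    (U : ℝ) (hU : 0 < U)
    (phi : ℝ) (hphi : phi ∈ Set.Ioo (0 : ℝ) 1)
    (lam bet : ℝ) (hmaxpos : 0 < max lam bet)
    (l : ℕ) (hl1 : 1 ≤ l) (hlM : l ≤ M)
    (hbound : max lam bet < (1 - phi) / (2 * (d : ℝ) * (1 - phi ^ l)))
    (u : ℝ → ℕ → ℝ)
    (hu0 : ∀ ε : ℝ, 0 < ε → u ε 0 = U)
    (hurec : ∀ ε : ℝ, 0 < ε → ∀ n : ℕ, 1 ≤ n → n ≤ M →
      u ε n = (1 / (phi * (n : ℝ))) *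
        (-ε * (∑ j ∈ Finset.range n, u ε j)
          - U * max lam bet * (2 * (d : ℝ)) * (n : ℝ) + (n : ℝ) * u ε (n - 1)))
    (εb : ℝ) (hεb : 0 < εb) :
    ∃ εs : ℝ, 0 < εs ∧ εs ≤ εb ∧ U < u εs (l - 1) / (2 * (d : ℝ) * max lam bet) := by
  obtain ⟨hphi0, hphi1⟩ := hphi
  set c := U * max lam bet * (2 * (d : ℝ))
  have hdpos : (0 : ℝ) < d := by exact_mod_cast hd
  have hc : c < driftSeq phi c U (l - 1) := by
    refine driftSeq.lt_of_mul_one_sub_pow_lt hphi0 hphi1 ?_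
    have hden : 0 < 2 * (d : ℝ) * (1 - phi ^ l) :=
      mul_pos (by positivity) (sub_pos.2 (pow_lt_one₀ hphi0.le hphi1 (by omega)))
    rw [Nat.sub_add_cancel hl1]
    have := mul_lt_mul_of_pos_left ((lt_div_iff₀ hden).1 hbound) hU
    linarith
  have hlim := tendsto_driftSeq_of_rec hphi0.ne' hu0 hurec (l - 1) (by omega)
  obtain ⟨εs, ⟨hεs0, hεsb⟩, hεsc⟩ :=
    (Eventually.and (Ioc_mem_nhdsGT hεb) (hlim.eventually_const_lt hc)).exists
  refine ⟨εs, hεs0, hεsb, ?_⟩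
  rw [lt_div_iff₀ (by positivity)]
  linarith

/-- Technical lemma for the u-criterion: with `u_l(ε)` defined recursively by `u_0(ε) = U` and
`u_l(ε) = (1/(φl))·(−ε·Σ_{j=0}^{l−1} u_j(ε) − U·max(λ,β)·2d·l + l·u_{l−1}(ε))`, if
`max(λ,β) < (1−φ)/(2d(1−φ^l))` and `u_k(ε) > 0` for every `0 ≤ k ≤ l−1` and `0 < ε ≤ ε̄`,
then there exists `0 < ε* ≤ ε̄` with `U < u_{l−1}(ε*) / (2d·max(λ,β))`. -/
theorem u_criterion_technical_bound
    (d M : ℕ) (hd : 1 ≤ d) (hM : 1 ≤ M)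
    (U : ℝ) (hU : 0 < U)
    (phi : ℝ) (hphi : phi ∈ Set.Ioo (0 : ℝ) 1)
    (lam bet : ℝ) (hlam : 0 ≤ lam) (hbet : 0 ≤ bet) (hmaxpos : 0 < max lam bet)
    (l : ℕ) (hl1 : 1 ≤ l) (hlM : l ≤ M)
    (hbound : max lam bet < (1 - phi) / (2 * (d : ℝ) * (1 - phi ^ l)))
    (u : ℝ → ℕ → ℝ)
    (hu0 : ∀ ε : ℝ, 0 < ε → u ε 0 = U)
    (hurec : ∀ ε : ℝ, 0 < ε → ∀ n : ℕ, 1 ≤ n → n ≤ M →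
      u ε n = (1 / (phi * (n : ℝ))) *
        (-ε * (∑ j ∈ Finset.range n, u ε j)
          - U * max lam bet * (2 * (d : ℝ)) * (n : ℝ) + (n : ℝ) * u ε (n - 1)))
    (εb : ℝ) (hεb : 0 < εb)
    (hupos : ∀ k ≤ l - 1, ∀ ε : ℝ, 0 < ε → ε ≤ εb → 0 < u ε k) :
    ∃ εs : ℝ, 0 < εs ∧ εs ≤ εb ∧ U < u εs (l - 1) / (2 * (d : ℝ) * max lam bet) :=
  u_criterion_technical_bound_general d M hd U hU phi hphi lam bet hmaxpos l hl1 hlM hbound u hu0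
    hurec εb hεb
end

section
/- Let d ≥ 1, M ≥ 1 be integers, λ, β, φ ≥ 0 reals, ε > 0, and let u_0, …, u_M be nonnegative reals with ū := max_{0 ≤ j ≤ M} u_j, satisfying the u-criterion inequality with parameter ε, with the convention u_{−1} = 0. Define, for a natural l ≤ M and a real s ≥ 0, G(l,s) = 1_{l=0}·λ·s·u_0 + 1_{1≤l≤M−1}·[ (β·s + l·φ)·u_l − l·u_{l−1} ] + 1_{l=M}·(−M·u_{M−1}). Then G(l,s) ≤ max(λ,β)·ū·s − ε·Σ_{j=0}^{l−1} u_j − max(λ,β)·2d·ū·l. -/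
/-- Generator bound for the individual recovery epidemic model (with `γ = 0`): if the
nonnegative weights `u_0, …, u_M` satisfy the u-criterion inequality with parameter `ε`,
then for every site state `l ≤ M` and neighbourhood sum `s ≥ 0`,
`G(l,s) ≤ max(λ,β)·ū·s − ε·Σ_{j=0}^{l−1} u_j − max(λ,β)·2d·ū·l`. -/
theorem generator_bound_of_u_criterion
    (d M : ℕ) (hd : 1 ≤ d) (hM : 1 ≤ M)
    (lam bet phi : ℝ) (hlam : 0 ≤ lam) (hbet : 0 ≤ bet) (hphi : 0 ≤ phi)
    (ε : ℝ) (hε : 0 < ε)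
    (u : ℕ → ℝ) (hu : ∀ j ≤ M, 0 ≤ u j)
    (hcrit : UCriterion d M lam bet phi ε u)
    (l : ℕ) (hl : l ≤ M) (s : ℝ) (hs : 0 ≤ s) :
    (if l = 0 then lam * s * u 0 else 0)
      + (if 1 ≤ l ∧ l ≤ M - 1 then
          (bet * s + (l : ℝ) * phi) * u l - (l : ℝ) * u (l - 1) else 0)
      + (if l = M then -((M : ℝ) * u (M - 1)) else 0)
    ≤ max lam bet * ((Finset.range (M + 1)).sup' (by simp) u) * s
        - ε * (∑ j ∈ Finset.range l, u j)
        - max lam bet * (2 * (d : ℝ)) * ((Finset.range (M + 1)).sup' (by simp) u) * (l : ℝ) := by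
  set ub := (Finset.range (M + 1)).sup' (by simp) u with hubdef
  have hub_le : ∀ j ≤ M, u j ≤ ub := fun j hj =>
    Finset.le_sup' u (Finset.mem_range.mpr (Nat.lt_succ_of_le hj))
  have hub0 : 0 ≤ ub := le_trans (hu 0 (Nat.zero_le M)) (hub_le 0 (Nat.zero_le M))
  rcases Nat.eq_zero_or_pos l with h0 | hpos
  · subst h0
    rw [if_pos rfl, if_neg (by omega : ¬ (1 ≤ 0 ∧ 0 ≤ M - 1)), if_neg (by omega : ¬ (0 = M))]
    simp only [Finset.range_zero, Finset.sum_empty, Nat.cast_zero, mul_zero, sub_zero, add_zero]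
    have h1 := hub_le 0 (Nat.zero_le M)
    have h2 := hu 0 (Nat.zero_le M)
    nlinarith [le_max_left lam bet, mul_nonneg hs h2, mul_nonneg (le_trans hlam (le_max_left lam bet)) hs]
  · by_cases hlM : l = M
    · subst hlM
      rw [if_neg (by omega : ¬ (l = 0)), if_neg (by omega : ¬ (1 ≤ l ∧ l ≤ l - 1)), if_pos rfl]
      have hc := hcrit l hpos le_rfl
      have h1 : 0 ≤ phi * (l : ℝ) * u l :=
        mul_nonneg (mul_nonneg hphi (Nat.cast_nonneg l)) (hu l le_rfl)
      have h2 : 0 ≤ max lam bet * ub * s :=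
        mul_nonneg (mul_nonneg (le_trans hlam (le_max_left lam bet)) hub0) hs
      have heq : ub * max lam bet * (2 * (d : ℝ)) * (l : ℝ)
          = max lam bet * (2 * (d : ℝ)) * ub * (l : ℝ) := by ring
      linarith [hc]
    · have hl1 : l ≤ M - 1 := by omega
      rw [if_neg (by omega : ¬ (l = 0)), if_pos ⟨hpos, hl1⟩, if_neg hlM]
      have hc := hcrit l hpos hl
      have hul := hu l hl
      have hulb := hub_le l hl
      have h1 : bet * s * u l ≤ max lam bet * ub * s := by
        nlinarith [mul_nonneg (mul_nonneg (sub_nonneg.mpr (le_max_right lam bet)) hs) hul,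
          mul_nonneg (mul_nonneg (le_trans hbet (le_max_right lam bet)) hs)
            (sub_nonneg.mpr hulb)]
      have heq : ub * max lam bet * (2 * (d : ℝ)) * (l : ℝ)
          = max lam bet * (2 * (d : ℝ)) * ub * (l : ℝ) := by ring
      nlinarith [hc, h1]
end

section
/- Let (α,β) ≤ (γ,δ) be naturals, p > 0, and nonnegative reals π̃⁺, g̃, π̃⁻ (lower rates Π̃^{0,1}_{α,β}, Γ̃¹_{α,β}, Π̃^{-1,0}_{α,β}) and π⁺, g, π⁻ (upper rates Π^{0,1}_{γ,δ}, Γ¹_{γ,δ}, Π^{-1,0}_{γ,δ}). Assume: (C+1) if β = δ then π̃⁺ + g̃ ≤ π⁺ + g; (C+10) if β = δ and γ = α then π̃⁺ ≤ π⁺; (C−1) if γ = α then π̃⁻ + g̃ ≥ π⁻ + g; (C−10) if γ = α and δ = β then π̃⁻ ≥ π⁻. Then every coupling rate whose transition breaks the partial order vanishes: if β = δ, then H^{0,1,0,0} = 0 and H^{1,1,0,0} = 0; if α = γ, then H^{0,0,-1,0} = 0 and H^{0,0,1,1} = 0. Hence the coupling is increasing. -/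
/- The `N = 1` coupling rates of Appendix A.  Here, at the pair of values
`(α,β) ≤ (γ,δ)`: `blo, glo, dlo` are the lower birth, jump and death rates
`Π̃^{0,1}_{α,β}, Γ̃¹_{α,β}, Π̃^{-1,0}_{α,β}`, and `bup, gup, dup` the upper ones
`Π^{0,1}_{γ,δ}, Γ¹_{γ,δ}, Π^{-1,0}_{γ,δ}`; `p = p(x,y)`. -/

/-- Coupled jump/jump rate `H^{1,1,1,1}`. -/
noncomputable def H1111 (α β γ δ : ℕ) (p glo gup : ℝ) : ℝ :=
  if β = δ ∨ α = γ then min glo gup * p else 0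

/-- Coupled birth/birth rate `H^{0,1,0,1}`. -/
noncomputable def H0101 (β δ : ℕ) (p blo bup : ℝ) : ℝ :=
  if β = δ then min blo bup * p else 0

/-- Coupled jump/birth rate `H^{1,1,0,1}`. -/
noncomputable def H1101 (α β γ δ : ℕ) (p glo gup blo bup : ℝ) : ℝ :=
  if β = δ then
    min (glo * p - H1111 α β γ δ p glo gup) (bup * p - H0101 β δ p blo bup)
  else 0

/-- Coupled birth/jump rate `H^{0,1,1,1}`. -/
noncomputable def H0111 (α β γ δ : ℕ) (p glo gup blo bup : ℝ) : ℝ :=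
  if β = δ ∧ α < γ then
    min (blo * p - H0101 β δ p blo bup) (gup * p - H1111 α β γ δ p glo gup)
  else 0

/-- Coupled death/death rate `H^{-1,0,-1,0}`. -/
noncomputable def Hm10m10 (α γ : ℕ) (p dlo dup : ℝ) : ℝ :=
  if α = γ then min dlo dup * p else 0

/-- Coupled death/jump rate `H^{-1,0,1,1}`. -/
noncomputable def Hm1011 (α β γ δ : ℕ) (p glo gup dlo dup : ℝ) : ℝ :=
  if α = γ then
    min (max (dlo * p - Hm10m10 α γ p dlo dup) 0) (gup * p - H1111 α β γ δ p glo gup)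
  else 0

/-- Coupled jump/death rate `H^{1,1,-1,0}`. -/
noncomputable def H11m10 (α β γ δ : ℕ) (p glo gup dlo dup : ℝ) : ℝ :=
  if α = γ ∧ β < δ then
    min (glo * p - H1111 α β γ δ p glo gup) (dup * p - Hm10m10 α γ p dlo dup)
  else 0

/-- Uncoupled lower-birth remainder `H^{0,1,0,0}`. -/
noncomputable def H0100 (α β γ δ : ℕ) (p glo gup blo bup : ℝ) : ℝ :=
  blo * p - H0101 β δ p blo bup - H0111 α β γ δ p glo gup blo bup

/-- Uncoupled lower-jump remainder `H^{1,1,0,0}`. -/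
noncomputable def H1100 (α β γ δ : ℕ) (p glo gup blo bup dlo dup : ℝ) : ℝ :=
  glo * p - H1111 α β γ δ p glo gup - H11m10 α β γ δ p glo gup dlo dup
    - H1101 α β γ δ p glo gup blo bup

/-- Uncoupled upper-death remainder `H^{0,0,-1,0}`. -/
noncomputable def H00m10 (α β γ δ : ℕ) (p glo gup dlo dup : ℝ) : ℝ :=
  dup * p - Hm10m10 α γ p dlo dup - H11m10 α β γ δ p glo gup dlo dup

/-- Uncoupled upper-jump remainder `H^{0,0,1,1}`. -/
noncomputable def H0011 (α β γ δ : ℕ) (p glo gup blo bup dlo dup : ℝ) : ℝ :=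
  gup * p - H1111 α β γ δ p glo gup - H0111 α β γ δ p glo gup blo bup
    - Hm1011 α β γ δ p glo gup dlo dup

set_option maxHeartbeats 1000000 in
/-- Under Conditions (C+1), (C+10), (C−1), (C−10), every coupling rate of the `N = 1`
coupling whose transition breaks the partial order vanishes: if `β = δ` then the uncoupled
lower-birth and lower-jump remainders are zero, and if `α = γ` then the uncoupled upper-death
and upper-jump remainders are zero.  Hence the coupling is increasing. -/
theorem coupling_increasing_N1
    (α β γ δ : ℕ) (hαγ : α ≤ γ) (hβδ : β ≤ δ)
    (p : ℝ) (hp : 0 < p)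
    (blo glo dlo bup gup dup : ℝ)
    (hblo : 0 ≤ blo) (hglo : 0 ≤ glo) (hdlo : 0 ≤ dlo)
    (hbup : 0 ≤ bup) (hgup : 0 ≤ gup) (hdup : 0 ≤ dup)
    (hCp1 : β = δ → blo + glo ≤ bup + gup)
    (hCp10 : β = δ → γ = α → blo ≤ bup)
    (hCm1 : γ = α → dlo + glo ≥ dup + gup)
    (hCm10 : γ = α → δ = β → dlo ≥ dup) :
    (β = δ → H0100 α β γ δ p glo gup blo bup = 0
        ∧ H1100 α β γ δ p glo gup blo bup dlo dup = 0)
      ∧ (α = γ → H00m10 α β γ δ p glo gup dlo dup = 0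
        ∧ H0011 α β γ δ p glo gup blo bup dlo dup = 0) := by
  have key : ∀ a b : ℝ, a ≤ b → a * p ≤ b * p :=
    fun a b h => mul_le_mul_of_nonneg_right h hp.le
  have hmin : ∀ a b : ℝ, min a b * p = min (a * p) (b * p) :=
    fun a b => min_mul_of_nonneg a b hp.le
  constructor
  · intro hb
    subst hb
    have hC1 := key _ _ (hCp1 rfl)
    by_cases ha : α = γ
    · have hC10 := key _ _ (hCp10 rfl ha.symm)
      subst ha
      simp only [H0100, H1100, H0101, H0111, H1111, H1101, H11m10, Hm10m10, hmin,
        eq_self_iff_true, true_or, or_true, true_and, and_true, lt_irrefl, and_false,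
        false_and, if_true, if_false]
      simp only [min_def, max_def]
      constructor <;> (split_ifs <;> linarith [hC1, hC10, key _ _ hblo, key _ _ hbup, key _ _ hglo, key _ _ hgup, key _ _ hdlo, key _ _ hdup])
    · have hlt : α < γ := lt_of_le_of_ne hαγ ha
      simp only [H0100, H1100, H0101, H0111, H1111, H1101, H11m10, Hm10m10, hmin,
        eq_self_iff_true, true_or, or_true, true_and, and_true, hlt, ha, if_true,
        false_and, and_false, if_false]
      simp only [min_def, max_def]
      constructor <;> (split_ifs <;> linarith [hC1, key _ _ hblo, key _ _ hbup, key _ _ hglo, key _ _ hgup, key _ _ hdlo, key _ _ hdup])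
  · intro ha
    subst ha
    have hC1 := key _ _ (hCm1 rfl)
    by_cases hb : β = δ
    · have hC10 := key _ _ (hCm10 rfl hb.symm)
      subst hb
      simp only [H00m10, H0011, Hm10m10, H11m10, Hm1011, H1111, H0111, hmin,
        eq_self_iff_true, true_or, or_true, true_and, and_true, lt_irrefl, and_false,
        false_and, if_true, if_false]
      simp only [min_def, max_def]
      constructor <;> (split_ifs <;> linarith [hC1, hC10, key _ _ hblo, key _ _ hbup, key _ _ hglo, key _ _ hgup, key _ _ hdlo, key _ _ hdup])
    · have hlt : β < δ := lt_of_le_of_ne hβδ hb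
      simp only [H00m10, H0011, Hm10m10, H11m10, Hm1011, H1111, H0111, hmin,
        eq_self_iff_true, true_or, or_true, true_and, and_true, hlt, hb, if_true,
        false_and, and_false, if_false]
      simp only [min_def, max_def]
      constructor <;> (split_ifs <;> linarith [hC1, key _ _ hblo, key _ _ hbup, key _ _ hglo, key _ _ hgup, key _ _ hdlo, key _ _ hdup])
end

section
/- Let N ≥ 1 and β ≤ δ be naturals with δ − β < N, and set N̂⁺ := N − δ + β ≥ 1. Let p > 0 and let Γ̃^N, Π̃^{0,N} be nonnegative reals (lower rates) and Γ^l, Π^{0,l} nonnegative reals for N̂⁺ ≤ l ≤ N (upper rates). Define the jump remainders J(l) downward by J(N+1) = Γ̃^N·p and J(l) = J(l+1) − min( J(l+1), Γ^l·p ) for l = N, N−1, …, N̂⁺, and the birth remainders B(l) downward by B(N+1) = Π̃^{0,N}·p and B(l) = B(l+1) − min( B(l+1), Π^{0,l}·p ) for l = N, N−1, …, N̂⁺. If Π̃^{0,N} + Γ̃^N ≤ Σ_{l=N̂⁺}^{N} ( Π^{0,l} + Γ^l ), then J(N̂⁺) = 0 or B(N̂⁺) = 0. -/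
lemma remainder_aux (Nhat N : ℕ) (hNN : Nhat ≤ N)
    (x : ℝ) (hx : 0 ≤ x) (g J : ℕ → ℝ)
    (hg : ∀ l, Nhat ≤ l → l ≤ N → 0 ≤ g l)
    (htop : J (N + 1) = x)
    (hstep : ∀ l, Nhat ≤ l → l ≤ N → J l = J (l + 1) - min (J (l + 1)) (g l)) :
    0 ≤ J Nhat ∧ (J Nhat = 0 ∨ J Nhat = x - ∑ k ∈ Finset.Icc Nhat N, g k) := by
  have key : ∀ d l, l + d = N + 1 → Nhat ≤ l →
      0 ≤ J l ∧ (J l = 0 ∨ J l = x - ∑ k ∈ Finset.Icc l N, g k) := by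
    intro d
    induction d with
    | zero =>
      intro l hl _
      have : l = N + 1 := by omega
      subst this
      rw [htop, Finset.Icc_eq_empty (by omega)]
      simp [hx]
    | succ d ih =>
      intro l hl hNl
      have hlN : l ≤ N := by omega
      have hstepl := hstep l hNl hlN
      obtain ⟨h1, h2⟩ := ih (l + 1) (by omega) (by omega)
      have hgl := hg l hNl hlN
      have hsum : ∑ k ∈ Finset.Icc l N, g k = g l + ∑ k ∈ Finset.Icc (l + 1) N, g k := by
        rw [show Finset.Icc l N = insert l (Finset.Icc (l + 1) N) by
          ext k; simp; omega, Finset.sum_insert (by simp)]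
      constructor
      · rw [hstepl]
        have : min (J (l + 1)) (g l) ≤ J (l + 1) := min_le_left _ _
        linarith
      · rcases h2 with h2 | h2
        · left
          rw [hstepl, h2]
          rw [min_eq_left hgl]
          ring
        · rcases le_or_gt (J (l + 1)) (g l) with hm | hm
          · left
            rw [hstepl, min_eq_left hm]
            ring
          · right
            rw [hstepl, min_eq_right hm.le, h2, hsum]
            ring
  exact key (N + 1 - Nhat) Nhat (by omega) le_rfl

/-- Lemma 3.3 ("N^B ∨ N^{d+} ≥ N̂⁺") of the coupling construction: let `N ≥ 1`, `β ≤ δ` with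
`δ − β < N`, and `N̂⁺ = N − (δ − β)`.  Let `J` and `B` be the downward remainders of the lower
`N`-particle jump rate `Γ̃^N·p` and birth rate `Π̃^{0,N}·p` after matching them with the upper
jump rates `Γ^l·p` and birth rates `Π^{0,l}·p` for `l = N, N−1, …, N̂⁺`.  If
`Π̃^{0,N} + Γ̃^N ≤ Σ_{l=N̂⁺}^{N} (Π^{0,l} + Γ^l)` (Condition (C+) with `K = 1`,
`j₁ = N̂⁺ − 1`, `m₁ = N`), then `J(N̂⁺) = 0` or `B(N̂⁺) = 0`. -/
theorem remainder_vanishes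
    (N β δ : ℕ) (hN : 1 ≤ N) (hβδ : β ≤ δ) (hδβ : δ - β < N)
    (Nhat : ℕ) (hNhat : Nhat = N - (δ - β))
    (p : ℝ) (hp : 0 < p)
    (gloN bloN : ℝ) (hgloN : 0 ≤ gloN) (hbloN : 0 ≤ bloN)
    (gup bup : ℕ → ℝ)
    (hgup : ∀ l, Nhat ≤ l → l ≤ N → 0 ≤ gup l)
    (hbup : ∀ l, Nhat ≤ l → l ≤ N → 0 ≤ bup l)
    (J B : ℕ → ℝ)
    (hJtop : J (N + 1) = gloN * p)
    (hJstep : ∀ l, Nhat ≤ l → l ≤ N → J l = J (l + 1) - min (J (l + 1)) (gup l * p))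
    (hBtop : B (N + 1) = bloN * p)
    (hBstep : ∀ l, Nhat ≤ l → l ≤ N → B l = B (l + 1) - min (B (l + 1)) (bup l * p))
    (hcond : bloN + gloN ≤ ∑ l ∈ Finset.Icc Nhat N, (bup l + gup l)) :
    J Nhat = 0 ∨ B Nhat = 0 := by
  have hNN : Nhat ≤ N := by omega
  obtain ⟨hJ0, hJ⟩ := remainder_aux Nhat N hNN (gloN * p) (by positivity)
    (fun l => gup l * p) J (fun l h1 h2 => by have := hgup l h1 h2; positivity) hJtop hJstep
  obtain ⟨hB0, hB⟩ := remainder_aux Nhat N hNN (bloN * p) (by positivity)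
    (fun l => bup l * p) B (fun l h1 h2 => by have := hbup l h1 h2; positivity) hBtop hBstep
  rcases hJ with hJ | hJ
  · exact Or.inl hJ
  rcases hB with hB | hB
  · exact Or.inr hB
  have hsum : (∑ k ∈ Finset.Icc Nhat N, gup k * p) + (∑ k ∈ Finset.Icc Nhat N, bup k * p)
      = (∑ l ∈ Finset.Icc Nhat N, (bup l + gup l)) * p := by
    rw [← Finset.sum_add_distrib, Finset.sum_mul]
    congr 1; ext k; ring
  have hmul : (bloN + gloN) * p ≤ (∑ l ∈ Finset.Icc Nhat N, (bup l + gup l)) * p :=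
    mul_le_mul_of_nonneg_right hcond hp.le
  have hle : J Nhat + B Nhat ≤ 0 := by nlinarith [hsum, hmul, hJ, hB]
  exact Or.inl (le_antisymm (by linarith) hJ0)
end

section
/- Let Γ : ℕ × ℕ → ℝ be nonnegative, interpreted as the single-particle jump rates Γ¹_{α,β} of a conservative process (all other rates zero, and no transitions of two or more particles). Then Conditions (C+) and (C−) with Γ̃ = Γ hold for all pairs (α,β) ≤ (γ,δ) and all integers K ≥ 1 and all nondecreasing K-tuples j, m, h of naturals, if and only if Γ(α,β) is nondecreasing in α for each fixed β and nonincreasing in β for each fixed α. In particular, a reaction-diffusion process with single-particle jumps is attractive exactly under this monotonicity. -/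
/-- Condition (C+) specialized to a single conservative system with only single-particle jump
rates `Γ¹_{α,β} = G α β`:  `Σ_{k ∈ I_a} Γ(α,β)·1_{k=1} ≤ Σ_{l ∈ I_b} Γ(γ,δ)·1_{l=1}`. -/
def CondPlusRD (G : ℕ → ℕ → ℝ) (α β γ δ : ℕ) (K : ℕ) (j m : Fin K → ℕ) : Prop :=
  (∑' k : ℕ, {k : ℕ | ∃ i : Fin K, k ≤ m i ∧ δ - β + j i < k}.indicator
      (fun k => if k = 1 then G α β else 0) k)
    ≤ (∑' l : ℕ, {l : ℕ | ∃ i : Fin K, l ≤ γ - α + m i ∧ j i < l}.indicator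
      (fun l => if l = 1 then G γ δ else 0) l)

/-- Condition (C−) specialized to a single conservative system with only single-particle jump
rates:  `Σ_{k ∈ I_d} Γ(α,β)·1_{k=1} ≥ Σ_{l ∈ I_c} Γ(γ,δ)·1_{l=1}`. -/
def CondMinusRD (G : ℕ → ℕ → ℝ) (α β γ δ : ℕ) (K : ℕ) (h m : Fin K → ℕ) : Prop :=
  (∑' k : ℕ, {k : ℕ | ∃ i : Fin K, k ≤ δ - β + m i ∧ h i < k}.indicator
      (fun k => if k = 1 then G α β else 0) k)
    ≥ (∑' l : ℕ, {l : ℕ | ∃ i : Fin K, l ≤ m i ∧ γ - α + h i < l}.indicator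
      (fun l => if l = 1 then G γ δ else 0) l)

open Classical in
lemma tsum_indicator_at_one (S : Set ℕ) (c : ℝ) :
    (∑' k : ℕ, S.indicator (fun k => if k = 1 then c else 0) k)
      = if 1 ∈ S then c else 0 := by
  rw [tsum_eq_single 1]
  · by_cases h : 1 ∈ S <;> simp [Set.indicator, h]
  · intro k hk
    by_cases h : k ∈ S <;> simp [Set.indicator, h, hk]

/-- A reaction-diffusion process with only single-particle jumps (rates `Γ¹_{α,β} = G α β`,
all other rates zero) is attractive — i.e. Conditions (C+) and (C−) hold for all pairs
`(α,β) ≤ (γ,δ)`, all `K ≥ 1` and all nondecreasing `K`-tuples `j, m, h` — if and only if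
`G α β` is nondecreasing in `α` for each fixed `β` and nonincreasing in `β` for each
fixed `α`. -/
theorem reaction_diffusion_attractive_iff
    (G : ℕ → ℕ → ℝ) (hG : ∀ a b, 0 ≤ G a b) :
    (∀ α β γ δ : ℕ, α ≤ γ → β ≤ δ →
        ∀ K : ℕ, 1 ≤ K → ∀ j m h : Fin K → ℕ,
          Monotone j → Monotone m → Monotone h →
          CondPlusRD G α β γ δ K j m ∧ CondMinusRD G α β γ δ K h m)
      ↔ ((∀ b a a' : ℕ, a ≤ a' → G a b ≤ G a' b)
          ∧ (∀ a b b' : ℕ, b ≤ b' → G a b' ≤ G a b)) := by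
  classical
  constructor
  · intro H
    constructor
    · intro b a a' haa
      have h := (H a b a' b haa le_rfl 1 le_rfl (fun _ => 0) (fun _ => 1) (fun _ => 0)
        monotone_const monotone_const monotone_const).1
      unfold CondPlusRD at h
      rw [tsum_indicator_at_one, tsum_indicator_at_one] at h
      have h1 : (1:ℕ) ∈ {k : ℕ | ∃ _ : Fin 1, k ≤ 1 ∧ b - b + 0 < k} :=
        ⟨0, le_rfl, by omega⟩
      have h2 : (1:ℕ) ∈ {l : ℕ | ∃ _ : Fin 1, l ≤ a' - a + 1 ∧ 0 < l} :=
        ⟨0, by omega, by omega⟩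
      rwa [if_pos h1, if_pos h2] at h
    · intro a b b' hbb
      have h := (H a b a b' le_rfl hbb 1 le_rfl (fun _ => 0) (fun _ => 1) (fun _ => 0)
        monotone_const monotone_const monotone_const).2
      unfold CondMinusRD at h
      rw [tsum_indicator_at_one, tsum_indicator_at_one] at h
      have h1 : (1:ℕ) ∈ {k : ℕ | ∃ _ : Fin 1, k ≤ b' - b + 1 ∧ 0 < k} :=
        ⟨0, by omega, by omega⟩
      have h2 : (1:ℕ) ∈ {l : ℕ | ∃ _ : Fin 1, l ≤ 1 ∧ a - a + 0 < l} :=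
        ⟨0, le_rfl, by omega⟩
      rwa [if_pos h1, if_pos h2] at h
  · rintro ⟨hmono, hanti⟩ α β γ δ hαγ hβδ K hK j m h hj hm hh
    constructor
    · unfold CondPlusRD
      rw [tsum_indicator_at_one, tsum_indicator_at_one]
      by_cases ha : (1:ℕ) ∈ {k : ℕ | ∃ i : Fin K, k ≤ m i ∧ δ - β + j i < k}
      · obtain ⟨i, hmi, hji⟩ := ha
        have hδ : δ = β := by omega
        have hb : (1:ℕ) ∈ {l : ℕ | ∃ i : Fin K, l ≤ γ - α + m i ∧ j i < l} :=
          ⟨i, by omega, by omega⟩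
        rw [if_pos ⟨i, hmi, hji⟩, if_pos hb]
        subst hδ
        exact hmono δ α γ hαγ
      · rw [if_neg ha]
        split_ifs
        · exact hG _ _
        · exact le_rfl
    · unfold CondMinusRD
      rw [tsum_indicator_at_one, tsum_indicator_at_one]
      by_cases hc : (1:ℕ) ∈ {l : ℕ | ∃ i : Fin K, l ≤ m i ∧ γ - α + h i < l}
      · obtain ⟨i, hmi, hhi⟩ := hc
        have hγ : γ = α := by omega
        have hd : (1:ℕ) ∈ {k : ℕ | ∃ i : Fin K, k ≤ δ - β + m i ∧ h i < k} :=
          ⟨i, by omega, by omega⟩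
        rw [if_pos hd, if_pos ⟨i, hmi, hhi⟩]
        subst hγ
        exact hanti γ β δ hβδ
      · rw [if_neg hc]
        split_ifs
        · exact hG _ _
        · exact le_rfl
end

section
/- Let d ≥ 1, M ≥ 1 be integers, U > 0, φ ∈ (0,1), and λ, β ≥ 0 with (1−φ)/(2d) < max(λ,β) < (1−φ)/(2d(1−φ^M)). For 1 ≤ j ≤ M set C_U(j) = U·(1 − φ^j) / ( φ^j·(1 − φ) ). Then there exists ε̄ > 0 such that for every ε with 0 < ε ≤ ε̄ and every 1 ≤ j ≤ M, the derivative of ε ↦ u_j(ε) (a polynomial function of ε) satisfies −C_U(j) ≤ (d/dε) u_j(ε) < 0. -/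
open Polynomial

noncomputable def PSeq (U phi K : ℝ) : ℕ → (Polynomial ℝ × Polynomial ℝ)
  | 0 => (C U, C U)
  | (l+1) =>
      let p := (PSeq U phi K l).1
      let s := (PSeq U phi K l).2
      let q := C (1/(phi*((l:ℝ)+1))) * (-X * s - C (K*((l:ℝ)+1)) + C ((l:ℝ)+1) * p)
      (q, s + q)

lemma PSeq_snd (U phi K : ℝ) (l : ℕ) :
    (PSeq U phi K l).2 = ∑ j ∈ Finset.range (l+1), (PSeq U phi K j).1 := by
  induction l with
  | zero => simp [PSeq]
  | succ n ih =>
      rw [Finset.sum_range_succ, ← ih]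
      rfl

lemma PSeq_fst_eval_succ (U phi K : ℝ) (l : ℕ) (e : ℝ) :
    ((PSeq U phi K (l+1)).1).eval e
      = (1/(phi*((l:ℝ)+1))) * (-e * ((PSeq U phi K l).2).eval e
          - K*((l:ℝ)+1) + ((l:ℝ)+1) * ((PSeq U phi K l).1).eval e) := by
  simp [PSeq]

lemma PSeq_deriv_eval_succ (U phi K : ℝ) (l : ℕ) (e : ℝ) :
    (((PSeq U phi K (l+1)).1).derivative).eval e
      = (1/(phi*((l:ℝ)+1))) * (-(((PSeq U phi K l).2).eval e
          + e * (((PSeq U phi K l).2).derivative).eval e)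
          + ((l:ℝ)+1) * (((PSeq U phi K l).1).derivative).eval e) := by
  simp [PSeq, derivative_mul]

lemma PSeq_eval_zero (U phi K : ℝ) (hphi : phi ∈ Set.Ioo (0:ℝ) 1) (l : ℕ) :
    ((PSeq U phi K l).1).eval 0
      = (U*(1-phi) - K*(1-phi^l))/(phi^l*(1-phi)) := by
  obtain ⟨h0, h1⟩ := hphi
  have hne : phi ≠ 0 := ne_of_gt h0
  have hne1 : (1:ℝ) - phi ≠ 0 := by linarith
  induction l with
  | zero => simp [PSeq, hne1]
  | succ n ih =>
      rw [PSeq_fst_eval_succ, ih]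
      have hn : ((n:ℝ)+1) ≠ 0 := by positivity
      field_simp
      ring

section Zero
variable {U phi K : ℝ} {M : ℕ}

lemma c_pos (hphi : phi ∈ Set.Ioo (0:ℝ) 1) (hU : 0 < U) (hK0 : 0 ≤ K)
    (hK2 : K * (1 - phi ^ M) < U * (1 - phi)) {l : ℕ} (hl : l ≤ M) :
    0 < ((PSeq U phi K l).1).eval 0 := by
  obtain ⟨h0, h1⟩ := hphi
  rw [PSeq_eval_zero U phi K ⟨h0, h1⟩]
  have hpow : phi ^ M ≤ phi ^ l := pow_le_pow_of_le_one h0.le h1.le hl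
  have hplpos : 0 < phi ^ l := pow_pos h0 l
  have : K * (1 - phi ^ l) ≤ K * (1 - phi ^ M) := by nlinarith
  apply div_pos (by nlinarith) (by nlinarith)

lemma c_lt_U (hphi : phi ∈ Set.Ioo (0:ℝ) 1) (hU : 0 < U)
    (hK1 : U * (1 - phi) < K) {l : ℕ} (hl : 1 ≤ l) :
    ((PSeq U phi K l).1).eval 0 < U := by
  obtain ⟨h0, h1⟩ := hphi
  rw [PSeq_eval_zero U phi K ⟨h0, h1⟩]
  have hplpos : 0 < phi ^ l := pow_pos h0 l
  have hpl1 : phi ^ l < 1 := pow_lt_one₀ h0.le h1 (by omega)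
  rw [div_lt_iff₀ (by nlinarith)]
  nlinarith

lemma c_le_U (hphi : phi ∈ Set.Ioo (0:ℝ) 1) (hU : 0 < U)
    (hK1 : U * (1 - phi) < K) (l : ℕ) :
    ((PSeq U phi K l).1).eval 0 ≤ U := by
  rcases Nat.eq_zero_or_pos l with h | h
  · subst h; simp [PSeq]
  · exact (c_lt_U hphi hU hK1 h).le

lemma Dzero_bounds (hphi : phi ∈ Set.Ioo (0:ℝ) 1) (hU : 0 < U) (hK0 : 0 ≤ K)
    (hK1 : U * (1 - phi) < K) (hK2 : K * (1 - phi ^ M) < U * (1 - phi))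
    (l : ℕ) (hl : l ≤ M) :
    (((PSeq U phi K l).1).derivative.eval 0 ≤ 0)
    ∧ (-(U * (1 - phi ^ l) / (phi ^ l * (1 - phi))) ≤ ((PSeq U phi K l).1).derivative.eval 0)
    ∧ (1 ≤ l → ((PSeq U phi K l).1).derivative.eval 0 < 0)
    ∧ (2 ≤ l → -(U * (1 - phi ^ l) / (phi ^ l * (1 - phi))) < ((PSeq U phi K l).1).derivative.eval 0) := by
  obtain ⟨h0, h1⟩ := hphi
  induction l with
  | zero => simp [PSeq]
  | succ n ih =>
      obtain ⟨hA, hB, _, _⟩ := ih (by omega)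
      have hSsum : ((PSeq U phi K n).2).eval 0
          = ∑ j ∈ Finset.range (n+1), ((PSeq U phi K j).1).eval 0 := by
        rw [PSeq_snd, Polynomial.eval_finset_sum]
      have hSpos : 0 < ((PSeq U phi K n).2).eval 0 := by
        rw [hSsum]
        apply Finset.sum_pos
        · intro j hj
          exact c_pos ⟨h0, h1⟩ hU hK0 hK2 (by
            have := Finset.mem_range.mp hj; omega)
        · exact ⟨0, Finset.mem_range.mpr (by omega)⟩
      have hSle : ((PSeq U phi K n).2).eval 0 ≤ ((n:ℝ)+1) * U := by
        rw [hSsum]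
        calc ∑ j ∈ Finset.range (n+1), ((PSeq U phi K j).1).eval 0
            ≤ ∑ _j ∈ Finset.range (n+1), U :=
              Finset.sum_le_sum (fun j _ => c_le_U ⟨h0, h1⟩ hU hK1 j)
          _ = ((n:ℝ)+1) * U := by simp
      have hSlt : 1 ≤ n → ((PSeq U phi K n).2).eval 0 < ((n:ℝ)+1) * U := by
        intro hn
        rw [hSsum]
        calc ∑ j ∈ Finset.range (n+1), ((PSeq U phi K j).1).eval 0
            < ∑ _j ∈ Finset.range (n+1), U := by
              apply Finset.sum_lt_sum
              · exact fun j _ => c_le_U ⟨h0, h1⟩ hU hK1 j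
              · exact ⟨1, Finset.mem_range.mpr (by omega), c_lt_U ⟨h0, h1⟩ hU hK1 le_rfl⟩
          _ = ((n:ℝ)+1) * U := by simp
      have hEq : ((PSeq U phi K (n+1)).1).derivative.eval 0
          = (-((PSeq U phi K n).2).eval 0 + ((n:ℝ)+1) * ((PSeq U phi K n).1).derivative.eval 0)
            / (phi * ((n:ℝ)+1)) := by
        rw [PSeq_deriv_eval_succ]
        ring
      have hapos : 0 < phi * ((n:ℝ)+1) := by positivity
      have hplpos : 0 < phi ^ (n+1) := pow_pos h0 _
      have hpnpos : 0 < phi ^ n := pow_pos h0 n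
      have hCid : phi * (U * (1 - phi ^ (n+1)) / (phi ^ (n+1) * (1 - phi)))
          = U + U * (1 - phi ^ n) / (phi ^ n * (1 - phi)) := by
        have h2 : (1:ℝ) - phi ≠ 0 := by linarith
        have h3 : phi ≠ 0 := ne_of_gt h0
        rw [pow_succ]
        field_simp
        ring
      have hnn : (0:ℝ) ≤ (n:ℝ) := Nat.cast_nonneg n
      refine ⟨?_, ?_, fun _ => ?_, fun h2 => ?_⟩
      · rw [hEq]
        apply le_of_lt
        apply div_neg_of_neg_of_pos _ hapos
        nlinarith
      · rw [hEq, le_div_iff₀ hapos]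
        nlinarith
      · rw [hEq]
        apply div_neg_of_neg_of_pos _ hapos
        nlinarith
      · have hn1 : 1 ≤ n := by omega
        have := hSlt hn1
        rw [hEq, lt_div_iff₀ hapos]
        nlinarith
end Zero


/-- Derivative bounds for the recursively defined sequence `u_l(ε)`:
with `u_0(ε) = U` and
`u_l(ε) = (1/(φl))·(−ε·Σ_{j=0}^{l−1} u_j(ε) − U·max(λ,β)·2d·l + l·u_{l−1}(ε))` for
`1 ≤ l ≤ M`, if `(1−φ)/(2d) < max(λ,β) < (1−φ)/(2d(1−φ^M))`, then there is `ε̄ > 0` such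
that for every `0 < ε ≤ ε̄` and every `1 ≤ j ≤ M`, the derivative of `ε ↦ u_j(ε)` satisfies
`−C_U(j) ≤ (d/dε) u_j(ε) < 0`, where `C_U(j) = U·(1 − φ^j)/(φ^j·(1 − φ))`. -/
theorem u_sequence_derivative_bounds
    (d M : ℕ) (hd : 1 ≤ d) (hM : 1 ≤ M)
    (U : ℝ) (hU : 0 < U)
    (phi : ℝ) (hphi : phi ∈ Set.Ioo (0 : ℝ) 1)
    (lam bet : ℝ) (hlam : 0 ≤ lam) (hbet : 0 ≤ bet)
    (hlow : (1 - phi) / (2 * (d : ℝ)) < max lam bet)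
    (hhigh : max lam bet < (1 - phi) / (2 * (d : ℝ) * (1 - phi ^ M)))
    (u : ℝ → ℕ → ℝ)
    (hu0 : ∀ ε : ℝ, 0 < ε → u ε 0 = U)
    (hurec : ∀ ε : ℝ, 0 < ε → ∀ l : ℕ, 1 ≤ l → l ≤ M →
      u ε l = (1 / (phi * (l : ℝ))) *
        (-ε * (∑ j ∈ Finset.range l, u ε j)
          - U * max lam bet * (2 * (d : ℝ)) * (l : ℝ) + (l : ℝ) * u ε (l - 1))) :
    ∃ εb : ℝ, 0 < εb ∧
      ∀ ε : ℝ, 0 < ε → ε ≤ εb → ∀ j : ℕ, 1 ≤ j → j ≤ M →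
        -(U * (1 - phi ^ j) / (phi ^ j * (1 - phi))) ≤ deriv (fun e => u e j) ε
          ∧ deriv (fun e => u e j) ε < 0 := by
  obtain ⟨h0, h1⟩ := hphi
  have hdpos : (0:ℝ) < 2 * (d:ℝ) := by
    have : (1:ℝ) ≤ (d:ℝ) := by exact_mod_cast hd
    linarith
  have hm0 : 0 ≤ max lam bet := le_trans hlam (le_max_left _ _)
  set K := U * max lam bet * (2 * (d:ℝ)) with hKdef
  have hK0 : 0 ≤ K := by positivity
  have hK1 : U * (1 - phi) < K := by
    rw [div_lt_iff₀ hdpos] at hlow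
    rw [hKdef]; nlinarith
  have hpM1 : phi ^ M < 1 := pow_lt_one₀ h0.le h1 (by omega)
  have hK2 : K * (1 - phi ^ M) < U * (1 - phi) := by
    have hden : (0:ℝ) < 2 * (d:ℝ) * (1 - phi ^ M) := by nlinarith
    rw [lt_div_iff₀ hden] at hhigh
    rw [hKdef]; nlinarith
  -- u agrees with the polynomial evaluation on positive ε
  have huP : ∀ ε : ℝ, 0 < ε → ∀ l : ℕ, l ≤ M → u ε l = ((PSeq U phi K l).1).eval ε := by
    intro ε hε l
    induction l using Nat.strong_induction_on with
    | _ l ih =>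
      intro hlM
      match l with
      | 0 => simp [PSeq, hu0 ε hε]
      | (n+1) =>
        rw [hurec ε hε (n+1) (by omega) hlM, PSeq_fst_eval_succ]
        have hsum : ∑ j ∈ Finset.range (n+1), u ε j = ((PSeq U phi K n).2).eval ε := by
          rw [PSeq_snd, Polynomial.eval_finset_sum]
          exact Finset.sum_congr rfl fun j hj =>
            ih j (Finset.mem_range.mp hj) (by have := Finset.mem_range.mp hj; omega)
        rw [hsum, show (n+1) - 1 = n from rfl, ih n (by omega) (by omega)]
        push_cast
        ring
  -- transfer of derivative
  have hderiv : ∀ ε : ℝ, 0 < ε → ∀ j : ℕ, j ≤ M →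
      deriv (fun e => u e j) ε = ((PSeq U phi K j).1).derivative.eval ε := by
    intro ε hε j hj
    have heq : (fun e => u e j) =ᶠ[nhds ε] fun e => ((PSeq U phi K j).1).eval e := by
      filter_upwards [Ioi_mem_nhds hε] with e he using huP e he j hj
    rw [heq.deriv_eq, Polynomial.deriv]
  -- j = 1 case: derivative is constant -U/phi
  have hf1 : ∀ e : ℝ, ((PSeq U phi K 1).1).derivative.eval e = -(U/phi) := by
    intro e
    rw [show (1:ℕ) = 0+1 from rfl, PSeq_deriv_eval_succ]
    simp [PSeq]
    ring
  have hCb1 : U * (1 - phi ^ 1) / (phi ^ 1 * (1 - phi)) = U / phi := by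
    have h2 : (1:ℝ) - phi ≠ 0 := by linarith
    have h3 : phi ≠ 0 := ne_of_gt h0
    rw [pow_one]
    field_simp
  -- per-j epsilon
  have perj : ∀ j : ℕ, 1 ≤ j → j ≤ M → ∃ ej : ℝ, 0 < ej ∧ ∀ e : ℝ, 0 < e → e ≤ ej →
      -(U * (1 - phi ^ j) / (phi ^ j * (1 - phi))) ≤ ((PSeq U phi K j).1).derivative.eval e
        ∧ ((PSeq U phi K j).1).derivative.eval e < 0 := by
    intro j hj1 hjM
    rcases eq_or_lt_of_le hj1 with h | hj2
    · refine ⟨1, one_pos, fun e _ _ => ?_⟩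
      rw [← h, hf1, hCb1]
      have : 0 < U / phi := by positivity
      exact ⟨le_refl _, by linarith⟩
    · have hD := Dzero_bounds ⟨h0, h1⟩ hU hK0 hK1 hK2 j hjM
      have hcont : Continuous fun e : ℝ => ((PSeq U phi K j).1).derivative.eval e :=
        Polynomial.continuous _
      have hmem : (fun e : ℝ => ((PSeq U phi K j).1).derivative.eval e) ⁻¹'
          Set.Ioo (-(U * (1 - phi ^ j) / (phi ^ j * (1 - phi)))) 0 ∈ nhds (0:ℝ) :=
        hcont.continuousAt.preimage_mem_nhds
          (isOpen_Ioo.mem_nhds ⟨hD.2.2.2 hj2, hD.2.2.1 hj1⟩)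
      obtain ⟨δ, hδpos, hball⟩ := Metric.mem_nhds_iff.mp hmem
      refine ⟨δ/2, by positivity, fun e he1 he2 => ?_⟩
      have hmem' : e ∈ Metric.ball (0:ℝ) δ := by
        simp only [Metric.mem_ball, Real.dist_eq, sub_zero, abs_of_pos he1]
        linarith
      have := hball hmem'
      exact ⟨this.1.le, this.2⟩
  -- combine
  have main : ∀ n : ℕ, ∃ εb : ℝ, 0 < εb ∧ ∀ ε : ℝ, 0 < ε → ε ≤ εb →
      ∀ j : ℕ, 1 ≤ j → j ≤ n → j ≤ M →
        -(U * (1 - phi ^ j) / (phi ^ j * (1 - phi))) ≤ ((PSeq U phi K j).1).derivative.eval ε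
          ∧ ((PSeq U phi K j).1).derivative.eval ε < 0 := by
    intro n
    induction n with
    | zero => exact ⟨1, one_pos, fun ε _ _ j hj1 hj0 _ => by omega⟩
    | succ n ihn =>
        obtain ⟨e1, he1, h1'⟩ := ihn
        by_cases hnM : n + 1 ≤ M
        · obtain ⟨e2, he2, h2'⟩ := perj (n+1) (by omega) hnM
          refine ⟨min e1 e2, lt_min he1 he2, fun ε hε hεle j hj1 hjn hjM => ?_⟩
          rcases Nat.lt_or_ge j (n+1) with h | h
          · exact h1' ε hε (le_trans hεle (min_le_left _ _)) j hj1 (by omega) hjM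
          · have : j = n+1 := by omega
            subst this
            exact h2' ε hε (le_trans hεle (min_le_right _ _))
        · exact ⟨e1, he1, fun ε hε hεle j hj1 hjn hjM =>
            h1' ε hε hεle j hj1 (by omega) hjM⟩
  obtain ⟨εb, hεb, hmain⟩ := main M
  refine ⟨εb, hεb, fun ε hε hεle j hj1 hjM => ?_⟩
  rw [hderiv ε hε j hjM]
  exact hmain ε hε hεle j hj1 hjM hjM
end
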